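/- arXiv:math/9911045 — 9 statements merged into one kernel-verified Lean document; each statement's English description precedes it below -/
import Mathlib

section
/- For the monomial z^k on l¹, its sup norm over the closed unit ball equals k^k / ‖k‖^‖k‖, i.e., sup_{‖z‖₁ ≤ 1} |z₁^{k₁} ⋯ z_n^{k_n}| = (∏ᵢ kᵢ^{kᵢ}) / (∑ᵢ kᵢ)^{∑ᵢ kᵢ}. -/
/-!
With `S = ∑ kᵢ`, weighted AM–GM with weights `kᵢ` applied to `|zᵢ| / kᵢ` gives
`∏ (|zᵢ| / kᵢ) ^ kᵢ ≤ (∑ |zᵢ| / S) ^ S ≤ S ^ (-S)` on the unit ball of `l¹`,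
and equality holds at `zᵢ = kᵢ / S`.
-/

open Finset

section AMGM

variable {ι : Type*} (s : Finset ι) (k : ι → ℕ)

theorem prod_div_sum_pow_self :
    ∏ i ∈ s, ((k i : ℝ) / (∑ j ∈ s, k j : ℕ)) ^ k i =
      (∏ i ∈ s, (k i : ℝ) ^ k i) / ((∑ i ∈ s, k i : ℕ) : ℝ) ^ (∑ i ∈ s, k i) := by
  simp_rw [div_pow]
  rw [prod_div_distrib, prod_pow_eq_pow_sum]

theorem prod_pow_le_of_sum_le_one {f : ι → ℝ} (hf : ∀ i ∈ s, 0 ≤ f i)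
    (hsum : ∑ i ∈ s, f i ≤ 1) :
    ∏ i ∈ s, f i ^ k i ≤
      (∏ i ∈ s, (k i : ℝ) ^ k i) / ((∑ i ∈ s, k i : ℕ) : ℝ) ^ (∑ i ∈ s, k i) := by
  set S := ∑ i ∈ s, k i with hS_def
  rcases Nat.eq_zero_or_pos S with hS | hS
  · have hk : ∀ i ∈ s, k i = 0 := sum_eq_zero_iff.mp hS
    have hone (g : ι → ℝ) : ∏ i ∈ s, g i ^ k i = 1 :=
      prod_eq_one fun i hi => by rw [hk i hi, pow_zero]
    simp [hS, hone]
  have hS' : (0 : ℝ) < S := by exact_mod_cast hS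
  have hquot : ∀ i ∈ s, 0 ≤ f i / k i := fun i hi => div_nonneg (hf i hi) (Nat.cast_nonneg _)
  have hmean : ∑ i ∈ s, (k i : ℝ) * (f i / k i) ≤ 1 := by
    refine le_trans (sum_le_sum fun i hi => ?_) hsum
    rcases eq_or_ne (k i : ℝ) 0 with hki | hki
    · simpa [hki] using hf i hi
    · rw [mul_div_cancel₀ _ hki]
  have amgm := Real.geom_mean_le_arith_mean s (fun i => (k i : ℝ)) (fun i => f i / k i)
    (fun i _ => Nat.cast_nonneg _) (by exact_mod_cast hS) hquot
  simp only [← Nat.cast_sum, ← hS_def, Real.rpow_natCast] at amgm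
  have hgeom : ∏ i ∈ s, (f i / k i) ^ k i ≤ ((S : ℝ)⁻¹) ^ S := by
    rw [← Real.rpow_natCast, ← Real.rpow_inv_le_iff_of_pos
      (prod_nonneg fun i hi => pow_nonneg (hquot i hi) _) (by positivity) hS']
    exact amgm.trans ((div_le_div_of_nonneg_right hmean hS'.le).trans_eq (one_div _))
  calc ∏ i ∈ s, f i ^ k i = (∏ i ∈ s, (f i / k i) ^ k i) * ∏ i ∈ s, (k i : ℝ) ^ k i := by
        rw [← prod_mul_distrib]
        refine prod_congr rfl fun i _ => ?_
        -- `(k i : ℝ) ^ k i ≠ 0` also when `k i = 0`, since `0 ^ 0 = 1`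
        rw [div_pow, div_mul_cancel₀ _ (by exact_mod_cast Nat.pow_self_pos.ne')]
    _ ≤ ((S : ℝ)⁻¹) ^ S * ∏ i ∈ s, (k i : ℝ) ^ k i := by gcongr
    _ = (∏ i ∈ s, (k i : ℝ) ^ k i) / (S : ℝ) ^ S := by rw [inv_pow, inv_mul_eq_div]

end AMGM

namespace lp

variable {α : Type*} {E : α → Type*} [∀ i, NormedAddCommGroup (E i)]

theorem sum_norm_le_norm (z : lp E 1) (s : Finset α) : ∑ i ∈ s, ‖z i‖ ≤ ‖z‖ := by
  simpa using lp.sum_rpow_le_norm_rpow (by simp) z s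

theorem norm_sum_single_one [DecidableEq α] (f : ∀ i, E i) (s : Finset α) :
    ‖∑ i ∈ s, lp.single 1 i (f i)‖ = ∑ i ∈ s, ‖f i‖ := by
  simpa using lp.norm_sum_single (p := 1) (by simp) f s

end lp

/-- For the monomial `z^k` on `l¹`, its sup over the closed unit ball equals
`k^k / ‖k‖^‖k‖`, where `‖k‖ = ∑ kᵢ` and `k^k = ∏ kᵢ^{kᵢ}` (with `0^0 = 1`). -/
theorem monomial_sup_norm (k : ℕ →₀ ℕ) :
    sSup {r : ℝ | ∃ z : lp (fun _ : ℕ => ℂ) 1, ‖z‖ ≤ 1 ∧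
        r = ‖∏ n ∈ k.support, (z n) ^ k n‖} =
      (∏ n ∈ k.support, (k n : ℝ) ^ k n) /
        ((k.sum fun _ v => v : ℕ) : ℝ) ^ (k.sum fun _ v => v : ℕ) := by
  rw [Finsupp.sum]
  set S := ∑ n ∈ k.support, k n
  set z₀ : lp (fun _ : ℕ => ℂ) 1 := ∑ n ∈ k.support, lp.single 1 n (((k n : ℝ) / S : ℝ) : ℂ)
  have hz₀ : ∀ n ∈ k.support, z₀ n = (((k n : ℝ) / S : ℝ) : ℂ) := fun n hn => by
    rw [lp.coeFn_sum, Finset.sum_apply]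
    simp only [lp.coeFn_single, Finset.sum_pi_single, if_pos hn]
  refine IsGreatest.csSup_eq ⟨⟨z₀, ?_, ?_⟩, ?_⟩
  · rw [lp.norm_sum_single_one]
    simp only [Complex.norm_real, Real.norm_eq_abs, abs_div, Nat.abs_cast, ← sum_div]
    exact div_le_one_of_le₀ (by simp [S]) (Nat.cast_nonneg _)
  · rw [norm_prod, ← prod_div_sum_pow_self]
    refine prod_congr rfl fun n hn => ?_
    rw [norm_pow, hz₀ n hn, Complex.norm_real, Real.norm_of_nonneg (by positivity)]
  · rintro _ ⟨z, hz, rfl⟩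
    simp only [norm_prod, norm_pow]
    exact prod_pow_le_of_sum_le_one _ _ (fun n _ => norm_nonneg _)
      ((lp.sum_norm_le_norm z _).trans hz)
end

section
/- If φ : X → ℂ is k-homogeneous on the l¹-sum X of finite dimensional Banach spaces (X_n, ‖·‖_n), i.e., φ is a continuous polynomial with φ(λx) = λ^k φ(x) for all x ∈ X and λ ∈ l^∞, then for all x ∈ X, |φ(x)| ≤ [φ] · |x|^k · ‖k‖^{‖k‖} / k^k, where [φ] = sup_{‖x‖≤1} |φ(x)| and |x|^k = ∏_n ‖x_n‖_n^{k_n}. -/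
/-!
Rescale the coordinates of `x` by `λₙ = kₙ / (‖k‖ ‖xₙ‖)`: the rescaled point has `l¹`-norm
`∑ kₙ / ‖k‖ = 1`, and homogeneity multiplies `φ` by `∏ λₙ ^ kₙ = k^k / (‖k‖^‖k‖ |x|^k)`.
If some `xₙ` with `n ∈ supp k` vanishes, then `φ x = 0` by taking `λₙ = 0`. Finally `[φ]` is
finite because `φ` is bounded near `0` and `|φ(c y)| = |c|^‖k‖ |φ y|`.
-/

open Finset

theorem bddAbove_norm_of_continuousAt_of_homogeneous {𝕜 F G : Type*}
    [NontriviallyNormedField 𝕜] [NormedAddCommGroup F] [NormedSpace 𝕜 F]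
    [NormedAddCommGroup G] [NormedSpace 𝕜 G] {φ : F → G} {d : ℕ} (hφ : ContinuousAt φ 0)
    (hhom : ∀ (c : 𝕜) (y : F), φ (c • y) = c ^ d • φ y) :
    BddAbove {r : ℝ | ∃ y : F, ‖y‖ ≤ 1 ∧ r = ‖φ y‖} := by
  obtain ⟨δ, hδ, hball⟩ := Metric.eventually_nhds_iff.mp <|
    hφ.norm.eventually (gt_mem_nhds (lt_add_one ‖φ 0‖))
  obtain ⟨c, hc0, hcδ⟩ := NormedField.exists_norm_lt 𝕜 hδ
  refine ⟨(‖φ 0‖ + 1) / ‖c‖ ^ d, ?_⟩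
  rintro r ⟨y, hy, rfl⟩
  have hcy : dist (c • y) 0 < δ := by
    rw [dist_zero_right, norm_smul]
    nlinarith [norm_nonneg y]
  have := hball hcy
  rw [hhom, norm_smul, norm_pow] at this
  rw [le_div_iff₀ (by positivity), mul_comm]
  exact this.le

theorem lp.exists_coe_eq_of_support_subset {ι : Type*} {E : ι → Type*}
    [∀ i, NormedAddCommGroup (E i)] {f : ∀ i, E i} (s : Finset ι)
    (hf : ∀ i ∉ s, f i = 0) : ∃ y : lp E 1, ⇑y = f ∧ ‖y‖ = ∑ i ∈ s, ‖f i‖ := by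
  classical
  refine ⟨∑ i ∈ s, lp.single 1 i (f i), ?_, ?_⟩
  · ext i
    simp only [lp.coeFn_sum, lp.coeFn_single, Finset.sum_apply, Finset.sum_pi_single]
    split_ifs with hi
    · rfl
    · exact (hf i hi).symm
  · simpa using lp.norm_sum_single (p := 1) (by simp) f s

theorem lp.exists_norm_le_one_coe_eq_smul {ι 𝕜 : Type*} [RCLike 𝕜] {E : ι → Type*}
    [∀ i, NormedAddCommGroup (E i)] [∀ i, NormedSpace 𝕜 (E i)] (k : ι →₀ ℕ) {x : lp E 1}
    (hx : ∀ n ∈ k.support, x n ≠ 0) :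
    ∃ y : lp E 1, ‖y‖ ≤ 1 ∧ ∀ n, y n = ((k n / (k.degree * ‖x n‖) : ℝ) : 𝕜) • x n := by
  obtain ⟨y, hy, hynorm⟩ := lp.exists_coe_eq_of_support_subset
    (f := fun n => ((k n / (k.degree * ‖x n‖) : ℝ) : 𝕜) • x n) k.support
    fun n hn => by simp [Finsupp.notMem_support_iff.mp hn]
  refine ⟨y, ?_, congrFun hy⟩
  have hkpos : ∀ n ∈ k.support, 0 < (k n : ℝ) := fun n hn =>
    Nat.cast_pos.mpr (Nat.pos_of_ne_zero (Finsupp.mem_support_iff.mp hn))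
  have hd : (k.degree : ℝ) = ∑ n ∈ k.support, (k n : ℝ) := by
    rw [Finsupp.degree_apply, Nat.cast_sum]
  have hcoord : ∀ n ∈ k.support,
      ‖((k n / (k.degree * ‖x n‖) : ℝ) : 𝕜) • x n‖ = k n / k.degree := fun n hn => by
    have := (hkpos n hn).trans_le (Nat.cast_le.mpr (Finsupp.le_degree n k))
    have := norm_pos_iff.mpr (hx n hn)
    rw [norm_smul, RCLike.norm_ofReal, abs_of_nonneg (by positivity)]
    field_simp
  rw [hynorm, sum_congr rfl hcoord, ← sum_div, ← hd]
  exact div_self_le_one _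

def IsMultiHomogeneous {ι 𝕜 : Type*} [NormedField 𝕜] {E : ι → Type*}
    [∀ i, NormedAddCommGroup (E i)] [∀ i, NormedSpace 𝕜 (E i)] (k : ι →₀ ℕ)
    (φ : lp E 1 → 𝕜) : Prop :=
  ∀ (x y : lp E 1) (lam : ι → 𝕜), (∀ n, y n = lam n • x n) →
    φ y = (∏ n ∈ k.support, lam n ^ k n) * φ x

namespace IsMultiHomogeneous

variable {ι 𝕜 : Type*} {E : ι → Type*} [∀ i, NormedAddCommGroup (E i)]
  {k : ι →₀ ℕ} {φ : lp E 1 → 𝕜}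

section NormedField

variable [NormedField 𝕜] [∀ i, NormedSpace 𝕜 (E i)]

theorem map_smul (h : IsMultiHomogeneous k φ) (c : 𝕜) (y : lp E 1) :
    φ (c • y) = c ^ k.degree * φ y := by
  rw [h y (c • y) (fun _ => c) (fun n => by rw [lp.coeFn_smul, Pi.smul_apply]),
    prod_pow_eq_pow_sum, Finsupp.degree_apply]

theorem eq_zero_of_apply_eq_zero (h : IsMultiHomogeneous k φ) {x : lp E 1}
    {n : ι} (hn : n ∈ k.support) (hx : x n = 0) : φ x = 0 := by
  classical
  have hfix := h x x (Function.update 1 n 0) fun m => by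
    rcases eq_or_ne m n with rfl | hm
    · simp [hx]
    · simp [hm]
  rwa [prod_eq_zero hn (by simpa using Finsupp.mem_support_iff.mp hn), zero_mul] at hfix

end NormedField

theorem norm_le_of_forall_ne_zero [RCLike 𝕜] [∀ i, NormedSpace 𝕜 (E i)]
    (h : IsMultiHomogeneous k φ) {M : ℝ} (hM : ∀ y : lp E 1, ‖y‖ ≤ 1 → ‖φ y‖ ≤ M)
    {x : lp E 1} (hx : ∀ n ∈ k.support, x n ≠ 0) :
    ‖φ x‖ ≤ M * (∏ n ∈ k.support, ‖x n‖ ^ k n) *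
      ((k.degree : ℝ) ^ k.degree / ∏ n ∈ k.support, (k n : ℝ) ^ k n) := by
  obtain ⟨y, hy1, hy⟩ := lp.exists_norm_le_one_coe_eq_smul (𝕜 := 𝕜) k hx
  set lam : ι → ℝ := fun n => k n / (k.degree * ‖x n‖)
  have hxpos : ∀ n ∈ k.support, 0 < ‖x n‖ := fun n hn => norm_pos_iff.mpr (hx n hn)
  have hkpos : ∀ n ∈ k.support, 0 < (k n : ℝ) := fun n hn =>
    Nat.cast_pos.mpr (Nat.pos_of_ne_zero (Finsupp.mem_support_iff.mp hn))
  set P := ∏ n ∈ k.support, lam n ^ k n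
  have hφy : ‖φ y‖ = P * ‖φ x‖ := by
    rw [h x y _ hy, norm_mul, norm_prod]
    congr 1
    refine prod_congr rfl fun n hn => ?_
    rw [norm_pow, RCLike.norm_ofReal, abs_of_nonneg (by have := hxpos n hn; positivity)]
  have hP : P = (∏ n ∈ k.support, (k n : ℝ) ^ k n) /
      ((k.degree : ℝ) ^ k.degree * ∏ n ∈ k.support, ‖x n‖ ^ k n) := by
    simp only [P, lam, div_pow, mul_pow, prod_div_distrib, prod_mul_distrib, prod_pow_eq_pow_sum,
      Finsupp.degree_apply]
  have hPpos : 0 < P := prod_pos fun n hn => by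
    have := hxpos n hn
    have := hkpos n hn
    have := (hkpos n hn).trans_le (Nat.cast_le.mpr (Finsupp.le_degree n k))
    simp only [lam]
    positivity
  calc ‖φ x‖ ≤ M / P := by rw [le_div_iff₀ hPpos, mul_comm, ← hφy]; exact hM y hy1
    _ = _ := by
      rw [hP]
      have := prod_pos hkpos
      field_simp

end IsMultiHomogeneous

theorem khomog_bound_general (E : ℕ → Type) [∀ n, NormedAddCommGroup (E n)]
    [∀ n, NormedSpace ℂ (E n)]
    (k : ℕ →₀ ℕ) (φ : lp E 1 → ℂ)
    (hφdiff : Differentiable ℂ φ)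
    (hφhom : ∀ (x y : lp E 1) (lam : ℕ → ℂ),
      (∀ n, y n = lam n • x n) →
      φ y = (∏ n ∈ k.support, lam n ^ k n) * φ x)
    (x : lp E 1) :
    ‖φ x‖ ≤
      sSup {r : ℝ | ∃ y : lp E 1, ‖y‖ ≤ 1 ∧ r = ‖φ y‖} *
        (∏ n ∈ k.support, ‖x n‖ ^ k n) *
        (((k.sum fun _ v => v : ℕ) : ℝ) ^ (k.sum fun _ v => v : ℕ) /
          ∏ n ∈ k.support, (k n : ℝ) ^ k n) := by
  have hφ : IsMultiHomogeneous k φ := hφhom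
  have hbdd := bddAbove_norm_of_continuousAt_of_homogeneous hφdiff.continuous.continuousAt
    fun c y => (hφ.map_smul c y).trans (smul_eq_mul _ _).symm
  have hM : ∀ y : lp E 1, ‖y‖ ≤ 1 → ‖φ y‖ ≤ sSup {r : ℝ | ∃ y : lp E 1, ‖y‖ ≤ 1 ∧ r = ‖φ y‖} :=
    fun y hy => le_csSup hbdd ⟨y, hy, rfl⟩
  by_cases hx : ∀ n ∈ k.support, x n ≠ 0
  · exact hφ.norm_le_of_forall_ne_zero hM hx
  · push Not at hx
    obtain ⟨n, hn, hxn⟩ := hx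
    have hM0 := (norm_nonneg _).trans (hM 0 (by simp))
    rw [hφ.eq_zero_of_apply_eq_zero hn hxn, norm_zero]
    positivity

/-- If `φ` is `k`-homogeneous on the `l¹`-sum `X` of finite dimensional Banach
spaces, then `|φ(x)| ≤ [φ] · |x|^k · ‖k‖^‖k‖ / k^k` for all `x ∈ X`, where
`[φ] = sup_{‖x‖ ≤ 1} |φ(x)|` and `|x|^k = ∏ ‖x_n‖^{k_n}`. -/
theorem khomog_bound (E : ℕ → Type) [∀ n, NormedAddCommGroup (E n)]
    [∀ n, NormedSpace ℂ (E n)] [∀ n, FiniteDimensional ℂ (E n)]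
    (k : ℕ →₀ ℕ) (φ : lp E 1 → ℂ)
    (hφdiff : Differentiable ℂ φ)
    (hφhom : ∀ (x y : lp E 1) (lam : ℕ → ℂ),
      (∀ n, y n = lam n • x n) →
      φ y = (∏ n ∈ k.support, lam n ^ k n) * φ x)
    (x : lp E 1) :
    ‖φ x‖ ≤
      sSup {r : ℝ | ∃ y : lp E 1, ‖y‖ ≤ 1 ∧ r = ‖φ y‖} *
        (∏ n ∈ k.support, ‖x n‖ ^ k n) *
        (((k.sum fun _ v => v : ℕ) : ℝ) ^ (k.sum fun _ v => v : ℕ) /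
          ∏ n ∈ k.support, (k n : ℝ) ^ k n) :=
  khomog_bound_general E k φ hφdiff hφhom x
end

section
/- Every compact subset K of the open unit ball B_X(1) of the l¹-sum X of finite dimensional Banach spaces is contained in σ²·B_X(1) for some sequence σ = (σ_n) with 0 ≤ σ_n < 1 and σ_n → 0, where σ²·B_X(1) = {(σ_n² y_n) : y ∈ B_X(1)}. -/
/-!
Tails of elements of `ℓ¹` tend to zero uniformly on a compact set `K` (Dini's theorem applied to
the partial sums of the norms). Choosing thresholds `N j` beyond which every tail is at most `ε j`,
with `∑ ε j` small, the weight `v n = #{j < n | N j ≤ n}` tends to infinity while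
`∑ v n ‖x n‖ = ∑ j (tail of x at N j)` stays small on `K`. Since `‖x‖ ≤ r < 1` on `K`, the weight
`w = c + v` with `1 < c` and `c r < 1` keeps `∑ w n ‖x n‖ < 1`, and `σ n = (w n)^(-1/2)` works.
-/

open Filter Finset
open scoped ENNReal

theorem IsCompact.exists_lt_forall_le_of_forall_lt {α β : Type*} [TopologicalSpace α]
    [LinearOrder β] [TopologicalSpace β] [OrderClosedTopology β] [NoMinOrder β]
    {K : Set α} {f : α → β} {a : β} (hK : IsCompact K) (hf : ContinuousOn f K)
    (h : ∀ x ∈ K, f x < a) : ∃ b < a, ∀ x ∈ K, f x ≤ b := by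
  rcases K.eq_empty_or_nonempty with rfl | hne
  · obtain ⟨b, hb⟩ := exists_lt a
    exact ⟨b, hb, by simp⟩
  · obtain ⟨x, hx, hmax⟩ := hK.exists_isMaxOn hne hf
    exact ⟨f x, h x hx, hmax⟩

theorem ENNReal.sum_range_add_tsum_indicator_Ici (f : ℕ → ℝ≥0∞) (m : ℕ) :
    ∑ n ∈ range m, f n + ∑' n, (Set.Ici m).indicator f n = ∑' n, f n := by
  rw [← ENNReal.sum_add_tsum_compl (range m) f, _root_.tsum_subtype, coe_range, Set.compl_Iio]

theorem ENNReal.exists_tendsto_atTop_tsum_natCast_mul_lt {ι : Type*} {s : Set ι}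
    {a : ι → ℕ → ℝ≥0∞} (ha : ∀ ε > 0, ∃ m, ∀ i ∈ s, ∑' n, (Set.Ici m).indicator (a i) n ≤ ε)
    {δ : ℝ≥0∞} (hδ : δ ≠ 0) :
    ∃ v : ℕ → ℕ, Tendsto v atTop atTop ∧ ∀ i ∈ s, ∑' n, (v n : ℝ≥0∞) * a i n < δ := by
  obtain ⟨ε, hε0, hεδ⟩ := ENNReal.exists_pos_sum_of_countable' hδ ℕ
  choose N hN using fun j => ha (ε j) (hε0 j)
  refine ⟨fun n => #{j ∈ range n | N j ≤ n}, tendsto_atTop.2 fun k => ?_, fun i hi => ?_⟩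
  · filter_upwards [eventually_ge_atTop k,
      (range k).eventually_all.2 fun j _ => eventually_ge_atTop (N j)] with n hkn hNn
    calc k = #(range k) := (card_range k).symm
      _ ≤ #{j ∈ range n | N j ≤ n} :=
        card_le_card fun j hj => mem_filter.2 ⟨range_subset_range.2 hkn hj, hNn j hj⟩
  · calc ∑' n, (#{j ∈ range n | N j ≤ n} : ℝ≥0∞) * a i n
        ≤ ∑' n, ∑' j, (Set.Ici (N j)).indicator (a i) n := by
          refine ENNReal.tsum_le_tsum fun n => ?_
          rw [← nsmul_eq_mul, ← sum_const, sum_filter]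
          simp only [← Set.mem_Ici, ← Set.indicator_apply]
          exact ENNReal.sum_le_tsum _
      _ = ∑' j, ∑' n, (Set.Ici (N j)).indicator (a i) n := ENNReal.tsum_comm
      _ ≤ ∑' j, ε j := ENNReal.tsum_le_tsum fun j => hN j i hi
      _ < δ := hεδ

section lpOne

variable {α : Type*} {E : α → Type*} [∀ i, NormedAddCommGroup (E i)]

theorem memℓp_one_iff_tsum_enorm_ne_top {f : ∀ i, E i} : Memℓp f 1 ↔ ∑' i, ‖f i‖ₑ ≠ ∞ := by
  simp only [memℓp_gen_iff (p := 1) (by norm_num), ENNReal.toReal_one, Real.rpow_one,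
    enorm_eq_nnnorm, ne_eq, ENNReal.tsum_coe_ne_top_iff_summable, ← NNReal.summable_coe,
    coe_nnnorm]

theorem lp.hasSum_norm_of_one (f : lp E 1) : HasSum (fun i => ‖f i‖) ‖f‖ := by
  simpa using lp.hasSum_norm (p := 1) (by norm_num) f

theorem lp.enorm_eq_tsum_enorm (f : lp E 1) : ‖f‖ₑ = ∑' i, ‖f i‖ₑ := by
  have hf := lp.hasSum_norm_of_one f
  simp only [← ofReal_norm, ← hf.tsum_eq,
    ENNReal.ofReal_tsum_of_nonneg (fun _ => norm_nonneg _) hf.summable]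

theorem lp.exists_coe_eq_norm_lt_of_tsum_enorm_lt {f : ∀ i, E i} {R : ℝ}
    (hf : ∑' i, ‖f i‖ₑ < ENNReal.ofReal R) : ∃ y : lp E 1, (∀ i, y i = f i) ∧ ‖y‖ < R := by
  let y : lp E 1 := ⟨f, memℓp_one_iff_tsum_enorm_ne_top.2 hf.ne_top⟩
  refine ⟨y, fun _ => rfl, (ENNReal.ofReal_lt_ofReal_iff'.1 ?_).1⟩
  rwa [ofReal_norm, lp.enorm_eq_tsum_enorm]

end lpOne

section lpNat

variable {E : ℕ → Type*} [∀ n, NormedAddCommGroup (E n)]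

theorem IsCompact.exists_forall_tsum_indicator_Ici_enorm_le {K : Set (lp E 1)} (hK : IsCompact K)
    {ε : ℝ≥0∞} (hε : 0 < ε) :
    ∃ m, ∀ x ∈ K, ∑' n, (Set.Ici m).indicator (fun n => ‖x n‖ₑ) n ≤ ε := by
  obtain ⟨ε', hε'0, hε'⟩ := ENNReal.lt_iff_exists_nnreal_btwn.1 hε
  have hDini : TendstoUniformlyOn (fun m (x : lp E 1) => ∑ n ∈ range m, ‖x n‖) (‖·‖) atTop K :=
    Monotone.tendstoUniformlyOn_of_forall_tendsto hK
      (fun m => (continuous_finsetSum _ fun n _ =>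
        ((lp.lipschitzWith_one_eval 1 n).continuous).norm).continuousOn)
      (fun x _ _ _ h => sum_le_sum_of_subset_of_nonneg (range_subset_range.2 h)
        fun _ _ _ => norm_nonneg _)
      continuous_norm.continuousOn fun x _ => (lp.hasSum_norm_of_one x).tendsto_sum_nat
  obtain ⟨m, hm⟩ := (Metric.tendstoUniformlyOn_iff.1 hDini ε' (by exact_mod_cast hε'0)).exists
  refine ⟨m, fun x hx => ?_⟩
  have hnorm : ‖x‖₊ ≤ ∑ n ∈ range m, ‖x n‖₊ + ε' := by
    have := hm x hx
    rw [Real.dist_eq, abs_lt] at this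
    rw [← NNReal.coe_le_coe]
    push_cast
    linarith
  refine (ENNReal.le_of_add_le_add_left (a := ∑ n ∈ range m, ‖x n‖ₑ) (by simp) ?_).trans hε'.le
  rw [ENNReal.sum_range_add_tsum_indicator_Ici, ← lp.enorm_eq_tsum_enorm]
  simp only [enorm_eq_nnnorm]
  exact_mod_cast hnorm

theorem IsCompact.exists_weight_tsum_lt_one {K : Set (lp E 1)} (hK : IsCompact K)
    (hKB : K ⊆ Metric.ball 0 1) :
    ∃ w : ℕ → ℝ, (∀ n, 1 < w n) ∧ Tendsto w atTop atTop ∧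
      ∀ x ∈ K, ∑' n, ENNReal.ofReal (w n) * ‖x n‖ₑ < 1 := by
  obtain ⟨r, hr, hKr⟩ := hK.exists_lt_forall_le_of_forall_lt continuous_norm.continuousOn
    fun x hx => mem_ball_zero_iff.1 (hKB hx)
  set c := 2 - r
  -- `1 - (2 - r) * r = (1 - r) ^ 2`
  have hcr : 0 < 1 - c * r := by nlinarith
  obtain ⟨v, hv, hvK⟩ := ENNReal.exists_tendsto_atTop_tsum_natCast_mul_lt
    (fun ε hε => hK.exists_forall_tsum_indicator_Ici_enorm_le hε) (ENNReal.ofReal_pos.2 hcr).ne'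
  refine ⟨fun n => c + v n, fun n => by linarith [(v n).cast_nonneg (α := ℝ)],
    tendsto_atTop_add_const_left _ c (tendsto_natCast_atTop_atTop.comp hv), fun x hx => ?_⟩
  have hc : 0 ≤ c := by linarith
  calc ∑' n, ENNReal.ofReal (c + v n) * ‖x n‖ₑ
      = ENNReal.ofReal c * ‖x‖ₑ + ∑' n, (v n : ℝ≥0∞) * ‖x n‖ₑ := by
        simp only [ENNReal.ofReal_add hc (Nat.cast_nonneg _), ENNReal.ofReal_natCast, add_mul,
          ENNReal.tsum_add, ENNReal.tsum_mul_left, lp.enorm_eq_tsum_enorm]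
    _ < ENNReal.ofReal (c * ‖x‖) + ENNReal.ofReal (1 - c * r) := by
        rw [← ofReal_norm, ← ENNReal.ofReal_mul hc]
        exact ENNReal.add_lt_add_left ENNReal.ofReal_ne_top (hvK x hx)
    _ ≤ 1 := by
        rw [← ENNReal.ofReal_add (by positivity) hcr.le, ENNReal.ofReal_le_one]
        nlinarith [hKr x hx]

end lpNat

theorem compact_subset_sigmasq_ball_general (E : ℕ → Type) [∀ n, NormedAddCommGroup (E n)]
    [∀ n, NormedSpace ℂ (E n)]
    (K : Set (lp E 1)) (hK : IsCompact K) (hKB : K ⊆ Metric.ball (0 : lp E 1) 1) :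
    ∃ σ : ℕ → ℝ, (∀ n, 0 ≤ σ n ∧ σ n < 1) ∧ Tendsto σ atTop (nhds 0) ∧
      K ⊆ {x : lp E 1 | ∃ y : lp E 1, ‖y‖ < 1 ∧ ∀ n, x n = ((σ n) ^ 2 : ℝ) • y n} := by
  obtain ⟨w, hw1, hw, hwK⟩ := hK.exists_weight_tsum_lt_one hKB
  have hw0 : ∀ n, 0 < w n := fun n => zero_lt_one.trans (hw1 n)
  refine ⟨fun n => √(w n)⁻¹, fun n => ⟨Real.sqrt_nonneg _, ?_⟩, ?_, fun x hx => ?_⟩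
  · exact (Real.sqrt_lt' one_pos).2 (by simpa using inv_lt_one_of_one_lt₀ (hw1 n))
  · simpa using hw.inv_tendsto_atTop.sqrt
  · obtain ⟨y, hyx, hy⟩ := lp.exists_coe_eq_norm_lt_of_tsum_enorm_lt (f := fun n => w n • x n)
      (R := 1) (by simpa [enorm_smul, Real.enorm_of_nonneg (hw0 _).le] using hwK x hx)
    refine ⟨y, hy, fun n => ?_⟩
    rw [hyx, Real.sq_sqrt (inv_nonneg.2 (hw0 n).le), smul_smul, inv_mul_cancel₀ (hw0 n).ne',
      one_smul]

/-- Every compact subset `K` of the open unit ball of the `l¹`-sum `X` of finite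
dimensional Banach spaces is contained in `σ²·B_X(1)` for some sequence `σ` with `0 ≤ σ_n < 1`
and `σ_n → 0`. -/
theorem compact_subset_sigmasq_ball (E : ℕ → Type) [∀ n, NormedAddCommGroup (E n)]
    [∀ n, NormedSpace ℂ (E n)] [∀ n, FiniteDimensional ℂ (E n)]
    (K : Set (lp E 1)) (hK : IsCompact K) (hKB : K ⊆ Metric.ball (0 : lp E 1) 1) :
    ∃ σ : ℕ → ℝ, (∀ n, 0 ≤ σ n ∧ σ n < 1) ∧ Tendsto σ atTop (nhds 0) ∧
      K ⊆ {x : lp E 1 | ∃ y : lp E 1, ‖y‖ < 1 ∧ ∀ n, x n = ((σ n) ^ 2 : ℝ) • y n} :=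
  compact_subset_sigmasq_ball_general E K hK hKB
end

section
/- Let c_k ≥ 0 be defined for all multiindices k and suppose sup_k c_k σ^k < ∞ for every sequence σ with 0 ≤ σ_n < 1 and σ_n → 0. Then for every real Q ≥ 1 and every such σ, sup_k c_k σ^k Q^{#k} < ∞, where #k is the cardinality of the support of k. -/
open Filter
open scoped BigOperators

/-- If `c_k ≥ 0` satisfies `sup_k c_k σ^k < ∞` for every `σ ∈ S₁` (sequences with
`0 ≤ σ_n < 1`, `σ_n → 0`), then for every `Q ≥ 1` and every such `σ`,
`sup_k c_k σ^k Q^{#k} < ∞`, where `#k = |supp k|` and `σ^k = ∏ σ_n^{k_n}`. -/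
theorem sup_with_Q_factor (c : (ℕ →₀ ℕ) → ℝ) (hc : ∀ k, 0 ≤ c k)
    (h : ∀ σ : ℕ → ℝ, (∀ n, 0 ≤ σ n ∧ σ n < 1) → Tendsto σ atTop (nhds 0) →
      BddAbove (Set.range fun k : ℕ →₀ ℕ => c k * ∏ n ∈ k.support, σ n ^ k n)) :
    ∀ (Q : ℝ), 1 ≤ Q →
    ∀ σ : ℕ → ℝ, (∀ n, 0 ≤ σ n ∧ σ n < 1) → Tendsto σ atTop (nhds 0) →
      BddAbove (Set.range fun k : ℕ →₀ ℕ =>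
        c k * (∏ n ∈ k.support, σ n ^ k n) * Q ^ k.support.card) := by
  intro Q hQ σ hσ1 hσ2
  have hQ0 : (0:ℝ) < Q := lt_of_lt_of_le one_pos hQ
  set τ : ℕ → ℝ := fun n => Real.sqrt (σ n) with hτdef
  have hτ1 : ∀ n, 0 ≤ τ n ∧ τ n < 1 := by
    intro n
    refine ⟨Real.sqrt_nonneg _, ?_⟩
    have : Real.sqrt (σ n) < Real.sqrt 1 := Real.sqrt_lt_sqrt (hσ1 n).1 (by simpa using (hσ1 n).2)
    simpa using this
  have hτ2 : Tendsto τ atTop (nhds 0) := by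
    exact (Real.continuous_sqrt.tendsto' 0 0 Real.sqrt_zero).comp hσ2
  obtain ⟨M, hM⟩ := h τ hτ1 hτ2
  obtain ⟨N, hN⟩ := eventually_atTop.mp
    (hσ2.eventually_lt_const (show (0:ℝ) < (Q⁻¹)^2 by positivity))
  refine ⟨Q ^ N * M, ?_⟩
  rintro x ⟨k, rfl⟩
  simp only
  have key : (∏ n ∈ k.support, σ n ^ k n) * Q ^ k.support.card
      ≤ Q ^ N * ∏ n ∈ k.support, τ n ^ k n := by
    have h1 : (Q:ℝ) ^ k.support.card = ∏ _n ∈ k.support, Q := by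
      rw [Finset.prod_const]
    rw [h1, ← Finset.prod_mul_distrib]
    have h2 : ∀ n ∈ k.support,
        σ n ^ k n * Q ≤ τ n ^ k n * (if n < N then Q else 1) := by
      intro n hn
      have hk : k n ≠ 0 := Finsupp.mem_support_iff.mp hn
      by_cases hnN : n < N
      · simp only [if_pos hnN]
        refine mul_le_mul_of_nonneg_right (pow_le_pow_left₀ (hσ1 n).1 ?_ _) hQ0.le
        -- σ n ≤ √(σ n)
        have hsq : Real.sqrt (σ n) ^ 2 = σ n := Real.sq_sqrt (hσ1 n).1
        nlinarith [Real.sqrt_nonneg (σ n), (hτ1 n).2]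
      · simp only [if_neg hnN]
        have hσlt : σ n < (Q⁻¹)^2 := hN n (le_of_not_gt hnN)
        have hτlt : τ n < Q⁻¹ := by
          have := Real.sqrt_lt_sqrt (hσ1 n).1 hσlt
          rwa [Real.sqrt_sq (by positivity)] at this
        have h3 : τ n ^ k n ≤ τ n := by
          calc τ n ^ k n ≤ τ n ^ 1 :=
                pow_le_pow_of_le_one (hτ1 n).1 (hτ1 n).2.le (Nat.one_le_iff_ne_zero.mpr hk)
            _ = τ n := pow_one _
        have heq : σ n ^ k n = τ n ^ k n * τ n ^ k n := by
          have hs : σ n = τ n ^ 2 := (Real.sq_sqrt (hσ1 n).1).symm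
          rw [hs, ← pow_mul, two_mul, pow_add]
        have h4 : τ n ^ k n * Q ≤ 1 := by
          have : τ n ^ k n * Q ≤ Q⁻¹ * Q :=
            mul_le_mul_of_nonneg_right (h3.trans hτlt.le) hQ0.le
          rwa [inv_mul_cancel₀ hQ0.ne'] at this
        calc σ n ^ k n * Q = τ n ^ k n * (τ n ^ k n * Q) := by rw [heq]; ring
          _ ≤ τ n ^ k n * 1 := mul_le_mul_of_nonneg_left h4 (by positivity)
    calc ∏ n ∈ k.support, σ n ^ k n * Q
        ≤ ∏ n ∈ k.support, τ n ^ k n * (if n < N then Q else 1) :=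
          Finset.prod_le_prod (fun n _ => mul_nonneg (pow_nonneg (hσ1 n).1 _) hQ0.le) h2
      _ = (∏ n ∈ k.support, τ n ^ k n) * ∏ n ∈ k.support, (if n < N then Q else 1) :=
          Finset.prod_mul_distrib
      _ ≤ (∏ n ∈ k.support, τ n ^ k n) * Q ^ N := by
          refine mul_le_mul_of_nonneg_left ?_ (by positivity)
          have heq : (∏ n ∈ k.support, (if n < N then Q else 1))
              = Q ^ (k.support.filter (· < N)).card := by
            rw [Finset.prod_ite, Finset.prod_const, Finset.prod_const, one_pow, mul_one]
          rw [heq]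
          have hcard : (k.support.filter (· < N)).card ≤ N := by
            have : (k.support.filter (· < N)) ⊆ Finset.range N := by
              intro n hn
              exact Finset.mem_range.mpr (Finset.mem_filter.mp hn).2
            simpa using Finset.card_le_card this
          exact pow_le_pow_right₀ hQ hcard
      _ = Q ^ N * ∏ n ∈ k.support, τ n ^ k n := mul_comm _ _
  have hmem : c k * ∏ n ∈ k.support, τ n ^ k n ≤ M :=
    hM ⟨k, rfl⟩
  calc c k * (∏ n ∈ k.support, σ n ^ k n) * Q ^ k.support.card
      = c k * ((∏ n ∈ k.support, σ n ^ k n) * Q ^ k.support.card) := by ring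
    _ ≤ c k * (Q ^ N * ∏ n ∈ k.support, τ n ^ k n) :=
        mul_le_mul_of_nonneg_left key (hc k)
    _ = Q ^ N * (c k * ∏ n ∈ k.support, τ n ^ k n) := by ring
    _ ≤ Q ^ N * M := mul_le_mul_of_nonneg_left hmem (by positivity)
end

section
/- Let 0 < θ < 1, let 𝒦 be a set of multiindices, and let c_k > 0 for k ∈ 𝒦 satisfy inf_{k∈𝒦} c_k θ^{‖k‖} > 0 and sup_{k∈𝒦} c_k σ^k < ∞ for all sequences σ with 0 ≤ σ_n < 1, σ_n → 0. Then sup_{k∈𝒦} c_k σ^k < ∞ also holds for all sequences σ with σ_n ≥ 0, σ_n → 0 (without the restriction σ_n < 1). -/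
/-!
Let `σ ∈ S` and pick `r > sup σ` and `q` with `r ≤ θ^{-q}`. Writing `σ_n = ρ_n^{q+1} r` with
`ρ_n = (σ_n / r)^{1/(q+1)}` gives `ρ ∈ S₁`, and
`c_k σ^k = c_k (ρ^k)^{q+1} r^{‖k‖} ≤ c_k (ρ^k)^{q+1} (c_k / δ)^q = (c_k ρ^k)^{q+1} / δ^q`,
because `r^{‖k‖} ≤ (θ^{‖k‖})^{-q} ≤ (c_k / δ)^q` with `δ ≤ c_k θ^{‖k‖}` the lower bound.
The right side is bounded by the hypothesis for `ρ`.
-/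

open Filter Topology

theorem Finset.prod_pow_mul_const_pow {ι M : Type*} [CommMonoid M] (s : Finset ι) (k : ι → ℕ)
    (ρ : ι → M) (p : ℕ) (r : M) :
    ∏ n ∈ s, (ρ n ^ p * r) ^ k n = (∏ n ∈ s, ρ n ^ k n) ^ p * r ^ ∑ n ∈ s, k n := by
  rw [← Finset.prod_pow_eq_pow_sum, ← Finset.prod_pow, ← Finset.prod_mul_distrib]
  exact Finset.prod_congr rfl fun n _ => by rw [mul_pow, pow_right_comm]

theorem exists_pow_mul_eq_of_lt {ι : Type*} {l : Filter ι} {σ : ι → ℝ} {r : ℝ} (hr : 0 < r)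
    (hσ0 : ∀ n, 0 ≤ σ n) (hσr : ∀ n, σ n < r) (hσ : Tendsto σ l (𝓝 0)) {p : ℕ} (hp : p ≠ 0) :
    ∃ ρ : ι → ℝ, (∀ n, 0 ≤ ρ n ∧ ρ n < 1) ∧ Tendsto ρ l (𝓝 0) ∧ ∀ n, σ n = ρ n ^ p * r := by
  have hτ0 : ∀ n, 0 ≤ σ n / r := fun n => div_nonneg (hσ0 n) hr.le
  have hp' : (0 : ℝ) < (p : ℝ)⁻¹ := by positivity
  refine ⟨fun n => (σ n / r) ^ (p : ℝ)⁻¹, fun n => ⟨Real.rpow_nonneg (hτ0 n) _, ?_⟩, ?_, ?_⟩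
  · exact Real.rpow_lt_one (hτ0 n) ((div_lt_one hr).2 (hσr n)) hp'
  · simpa [Real.zero_rpow hp'.ne'] using (hσ.div_const r).rpow_const (Or.inr hp'.le)
  · intro n
    rw [Real.rpow_inv_natCast_pow (hτ0 n) hp, div_mul_cancel₀ _ hr.ne']

theorem mul_pow_succ_mul_pow_le {θ δ c P r B : ℝ} {m q : ℕ} (hθ : 0 < θ) (hδ : 0 < δ)
    (hcθ : δ ≤ c * θ ^ m) (hP : 0 ≤ P) (hr0 : 0 ≤ r) (hr : r ≤ θ⁻¹ ^ q) (hB : c * P ≤ B) :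
    c * P ^ (q + 1) * r ^ m ≤ B ^ (q + 1) / δ ^ q := by
  have hθm : 0 < θ ^ m := pow_pos hθ m
  have hc : 0 < c := pos_of_mul_pos_left (hδ.trans_le hcθ) hθm.le
  have hinv : (θ ^ m)⁻¹ ≤ c / δ := by
    rw [le_div_iff₀ hδ, inv_mul_le_iff₀ hθm, mul_comm]
    exact hcθ
  have hrm : r ^ m ≤ (c / δ) ^ q :=
    calc r ^ m ≤ (θ⁻¹ ^ q) ^ m := by gcongr
      _ = ((θ ^ m)⁻¹) ^ q := by rw [← pow_mul, mul_comm, pow_mul, inv_pow]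
      _ ≤ (c / δ) ^ q := by gcongr
  calc c * P ^ (q + 1) * r ^ m ≤ c * P ^ (q + 1) * (c / δ) ^ q := by gcongr
    _ = (c * P) ^ (q + 1) / δ ^ q := by rw [div_pow]; ring
    _ ≤ B ^ (q + 1) / δ ^ q := by gcongr

theorem sup_extends_to_S_general (θ : ℝ) (hθ0 : 0 < θ) (hθ1 : θ < 1)
    (𝒦 : Set (ℕ →₀ ℕ)) (c : (ℕ →₀ ℕ) → ℝ)
    (hinf : ∃ δ : ℝ, 0 < δ ∧ ∀ k ∈ 𝒦, δ ≤ c k * θ ^ (k.sum fun _ v => v : ℕ))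
    (hsup : ∀ σ : ℕ → ℝ, (∀ n, 0 ≤ σ n ∧ σ n < 1) → Tendsto σ atTop (nhds 0) →
      BddAbove ((fun k : ℕ →₀ ℕ => c k * ∏ n ∈ k.support, σ n ^ k n) '' 𝒦)) :
    ∀ σ : ℕ → ℝ, (∀ n, 0 ≤ σ n) → Tendsto σ atTop (nhds 0) →
      BddAbove ((fun k : ℕ →₀ ℕ => c k * ∏ n ∈ k.support, σ n ^ k n) '' 𝒦) := by
  obtain ⟨δ, hδ, hδc⟩ := hinf
  intro σ hσ0 hσ
  obtain ⟨M, hM⟩ := hσ.bddAbove_range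
  have hσr : ∀ n, σ n < M + 1 := fun n => (hM ⟨n, rfl⟩).trans_lt (lt_add_one M)
  have hr : 0 < M + 1 := (hσ0 0).trans_lt (hσr 0)
  obtain ⟨q, hq⟩ := pow_unbounded_of_one_lt (M + 1) (one_lt_inv₀ hθ0 |>.2 hθ1)
  obtain ⟨ρ, hρ, hρlim, hσρ⟩ := exists_pow_mul_eq_of_lt hr hσ0 hσr hσ q.succ_ne_zero
  obtain ⟨B, hB⟩ := hsup ρ hρ hρlim
  refine ⟨B ^ (q + 1) / δ ^ q, ?_⟩
  rintro _ ⟨k, hk, rfl⟩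
  simp only [hσρ, Finset.prod_pow_mul_const_pow, ← mul_assoc]
  exact mul_pow_succ_mul_pow_le hθ0 hδ (hδc k hk)
    (Finset.prod_nonneg fun n _ => pow_nonneg (hρ n).1 _) hr.le hq.le (hB ⟨k, hk, rfl⟩)

/-- Let `0 < θ < 1`, `𝒦` a set of multiindices, and `c_k > 0` for `k ∈ 𝒦` with
`inf_{k∈𝒦} c_k θ^{‖k‖} > 0` and `sup_{k∈𝒦} c_k σ^k < ∞` for all `σ ∈ S₁`. Then
`sup_{k∈𝒦} c_k σ^k < ∞` for all `σ ∈ S` (only `σ_n ≥ 0`, `σ_n → 0`). -/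
theorem sup_extends_to_S (θ : ℝ) (hθ0 : 0 < θ) (hθ1 : θ < 1)
    (𝒦 : Set (ℕ →₀ ℕ)) (c : (ℕ →₀ ℕ) → ℝ) (hc : ∀ k ∈ 𝒦, 0 < c k)
    (hinf : ∃ δ : ℝ, 0 < δ ∧ ∀ k ∈ 𝒦, δ ≤ c k * θ ^ (k.sum fun _ v => v : ℕ))
    (hsup : ∀ σ : ℕ → ℝ, (∀ n, 0 ≤ σ n ∧ σ n < 1) → Tendsto σ atTop (nhds 0) →
      BddAbove ((fun k : ℕ →₀ ℕ => c k * ∏ n ∈ k.support, σ n ^ k n) '' 𝒦)) :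
    ∀ σ : ℕ → ℝ, (∀ n, 0 ≤ σ n) → Tendsto σ atTop (nhds 0) →
      BddAbove ((fun k : ℕ →₀ ℕ => c k * ∏ n ∈ k.support, σ n ^ k n) '' 𝒦) :=
  sup_extends_to_S_general θ hθ0 hθ1 𝒦 c hinf hsup
end

section
/- The series defining Lempert's dominating function Δ(q,z) = ∑_k (‖k‖^{‖k‖}/k^k) |q|^{#k} |z^k|, summed over all multiindices k, converges uniformly on compact subsets of ℂ × B_{l¹}(1). -/
/-!
On a compact set `K ⊆ ℂ × B_{l¹}(1)` we have `|q| ≤ C`, `‖z‖ ≤ r < 1`, and, by Dini's theorem,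
the `l¹`-tails of `z` are uniformly small. It suffices to find, for every `ε > 0`, a finite set of
multiindices outside of which every finite partial sum of `Δ` is at most `ε`, uniformly on `K`.

For multiindices supported in a fixed finite set `S'`, weighted AM-GM gives
`‖k‖^‖k‖ / k^k * |z^k| ≤ r^‖k‖`, and these are summable. Any other `k` is split into its head on
a smaller finite set `S` and its tail. Since `(m + l)^(m + l) ≤ e^(δm) (e/δ)^l m^m l^l` and
`l^l / b^b ≤ e^l l!/b!`, the term is at most a geometric factor `(e^δ r)^m` in the head degree
times a multinomial term `l!/b! (G|z|)^b` in the tail, where `G = e²C/δ`. By the multinomial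
theorem the tails sum to at most a multiple of the `l¹`-mass of `G|z|` outside `S'`, which is
uniformly small.
-/

open Filter
open scoped BigOperators

namespace LempertDelta

open Finset Finsupp Real

theorem tendstoUniformlyOn_tsum_of_vanishing {ι α E : Type*} [NormedAddCommGroup E]
    [CompleteSpace E] {f : ι → α → E} {K : Set α}
    (h : ∀ ε > 0, ∃ s : Finset ι, ∀ x ∈ K, ∀ t : Finset ι, Disjoint t s →
      ‖∑ i ∈ t, f i x‖ ≤ ε) :
    TendstoUniformlyOn (fun s x => ∑ i ∈ s, f i x) (fun x => ∑' i, f i x) atTop K := by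
  have hsum : ∀ x ∈ K, Summable (f · x) := fun x hx =>
    summable_iff_vanishing_norm.2 fun ε hε =>
      let ⟨s, hs⟩ := h (ε / 2) (half_pos hε)
      ⟨s, fun t ht => (hs x hx t ht).trans_lt (half_lt_self hε)⟩
  rw [Metric.tendstoUniformlyOn_iff]
  intro ε hε
  obtain ⟨s, hs⟩ := h (ε / 2) (half_pos hε)
  filter_upwards [eventually_ge_atTop s] with s' hs' x hx
  rw [dist_eq_norm, ← (hsum x hx).sum_add_tsum_compl (s := s'), add_sub_cancel_left]
  refine lt_of_le_of_lt (le_of_tendsto' ((hsum x hx).subtype _).hasSum.norm fun w => ?_)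
    (half_lt_self hε)
  have hw : ∑ i ∈ w, f i x = ∑ i ∈ w.map (.subtype _), f i x := by rw [Finset.sum_map]; rfl
  simp only [Function.comp_def, hw]
  refine hs x hx _ (Finset.disjoint_left.2 fun i hi his => ?_)
  obtain ⟨j, -, rfl⟩ := Finset.mem_map.1 hi
  exact j.2 (hs' his)

lemma sum_mul_le_sum_image_mul_sum_image {α β γ R : Type*} [DecidableEq β] [DecidableEq γ]
    [CommSemiring R] [PartialOrder R] [IsOrderedRing R] {t : Finset α} {φ : α → β} {ψ : α → γ}
    (hinj : Set.InjOn (fun a => (φ a, ψ a)) t) {f : β → R} {g : γ → R} (hf : 0 ≤ f)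
    (hg : 0 ≤ g) :
    ∑ a ∈ t, f (φ a) * g (ψ a) ≤ (∑ b ∈ t.image φ, f b) * ∑ c ∈ t.image ψ, g c := by
  rw [Finset.sum_mul_sum, ← Finset.sum_product',
    ← Finset.sum_image (f := fun p : β × γ => f p.1 * g p.2) hinj]
  refine Finset.sum_le_sum_of_subset_of_nonneg (fun p hp => ?_)
    fun p _ _ => mul_nonneg (hf _) (hg _)
  obtain ⟨a, ha, rfl⟩ := Finset.mem_image.1 hp
  exact Finset.mem_product.2 ⟨Finset.mem_image_of_mem _ ha, Finset.mem_image_of_mem _ ha⟩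

lemma sum_geometric_le {x : ℝ} (hx₀ : 0 ≤ x) (hx₁ : x < 1) (J : Finset ℕ) :
    ∑ j ∈ J, x ^ j ≤ (1 - x)⁻¹ :=
  tsum_geometric_of_lt_one hx₀ hx₁ ▸
    (summable_geometric_of_lt_one hx₀ hx₁).sum_le_tsum J fun _ _ => pow_nonneg hx₀ _

lemma sum_range_pow_sub_pow_le {A B : ℝ} (hB : 0 ≤ B) (hBA : B ≤ A) (hA : A ≤ 1 / 2) (L : ℕ) :
    ∑ l ∈ range L, (A ^ l - B ^ l) ≤ 4 * (A - B) := by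
  have hA' := summable_geometric_of_lt_one (hB.trans hBA) (by linarith)
  have hB' := summable_geometric_of_lt_one hB (by linarith)
  calc ∑ l ∈ range L, (A ^ l - B ^ l) ≤ ∑' l, (A ^ l - B ^ l) :=
        (hA'.sub hB').sum_le_tsum _ fun l _ => sub_nonneg.2 (pow_le_pow_left₀ hB hBA l)
    _ = (A - B) / ((1 - A) * (1 - B)) := by
        have : 1 - A ≠ 0 := by linarith
        have : 1 - B ≠ 0 := by linarith
        rw [hA'.tsum_sub hB', tsum_geometric_of_lt_one (hB.trans hBA) (by linarith),
          tsum_geometric_of_lt_one hB (by linarith)]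
        field_simp
        ring
    _ ≤ 4 * (A - B) := by
        have hAB : 1 / 4 ≤ (1 - A) * (1 - B) := by nlinarith
        rw [div_le_iff₀ (by linarith)]
        nlinarith [mul_le_mul_of_nonneg_left hAB (sub_nonneg.2 hBA)]

lemma add_pow_le_exp_mul_pow (l : ℕ) {s : ℝ} (hs : 0 ≤ s) :
    ((l : ℝ) + s) ^ l ≤ exp s * (l : ℝ) ^ l := by
  rcases Nat.eq_zero_or_pos l with rfl | hl
  · simpa using one_le_exp hs
  have hl' : (0 : ℝ) < l := by exact_mod_cast hl
  calc ((l : ℝ) + s) ^ l = (1 + s / l) ^ l * (l : ℝ) ^ l := by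
        rw [← mul_pow]; congr 1; field_simp
    _ ≤ exp (s / l) ^ l * (l : ℝ) ^ l := by
        gcongr
        linarith [add_one_le_exp (s / l)]
    _ = exp s * (l : ℝ) ^ l := by rw [← exp_nat_mul, mul_div_cancel₀ _ hl'.ne']

/-- Merging a head of degree `m` with a tail of degree `l` costs only `exp δ` per unit of
head degree. -/
lemma cast_add_pow_add_le {δ : ℝ} (hδ₀ : 0 < δ) (hδ₁ : δ ≤ 1) (m l : ℕ) :
    ((m + l : ℕ) : ℝ) ^ (m + l) ≤ exp δ ^ m * (exp 1 / δ) ^ l * ((m : ℝ) ^ m * (l : ℝ) ^ l) := by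
  have hm : ((m : ℝ) + l) ^ m ≤ exp l * (m : ℝ) ^ m := add_pow_le_exp_mul_pow m l.cast_nonneg
  have hl : δ ^ l * ((m : ℝ) + l) ^ l ≤ exp (δ * m) * (l : ℝ) ^ l :=
    calc δ ^ l * ((m : ℝ) + l) ^ l = (δ * l + δ * m) ^ l := by rw [← mul_pow]; ring
      _ ≤ ((l : ℝ) + δ * m) ^ l := by
          gcongr
          nlinarith [l.cast_nonneg (α := ℝ)]
      _ ≤ exp (δ * m) * (l : ℝ) ^ l := add_pow_le_exp_mul_pow l (by positivity)
  rw [← exp_one_pow, mul_comm δ, exp_nat_mul] at *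
  rw [Nat.cast_add, pow_add, div_pow]
  have hδl : 0 < δ ^ l := by positivity
  rw [mul_comm (δ ^ l), ← le_div_iff₀ hδl] at hl
  calc ((m : ℝ) + l) ^ m * ((m : ℝ) + l) ^ l
      ≤ (exp 1 ^ l * (m : ℝ) ^ m) * (exp δ ^ m * (l : ℝ) ^ l / δ ^ l) := by
        gcongr
    _ = _ := by ring

lemma exists_exp_mul_lt_one {r : ℝ} (hr₀ : 0 ≤ r) (hr₁ : r < 1) :
    ∃ δ, 0 < δ ∧ δ ≤ 1 ∧ exp δ * r < 1 := by
  refine ⟨(1 - r) / 2, by linarith, by linarith, ?_⟩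
  have := exp_bound_div_one_sub_of_interval' (x := (1 - r) / 2) (by linarith) (by linarith)
  calc exp ((1 - r) / 2) * r ≤ 1 / (1 - (1 - r) / 2) * r := by gcongr
    _ < 1 := by rw [div_mul_eq_mul_div, div_lt_one (by linarith)]; linarith

section lp

variable {α : Type*} {E : α → Type*} [∀ a, NormedAddCommGroup (E a)]

lemma sum_norm_le_norm (z : lp E 1) (s : Finset α) : ∑ i ∈ s, ‖z i‖ ≤ ‖z‖ := by
  simpa using lp.sum_rpow_le_norm_rpow (p := 1) (by simp) z s

/-- Dini's theorem for the tails `‖z‖ - ∑ i ∈ S, ‖z i‖`. -/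
lemma exists_sum_norm_le_of_isCompact {L : Set (lp E 1)} (hL : IsCompact L) {η : ℝ}
    (hη : 0 < η) : ∃ S : Finset α, ∀ z ∈ L, ∀ F, Disjoint F S → ∑ i ∈ F, ‖z i‖ ≤ η := by
  have hτ : TendstoUniformlyOn (fun (S : Finset α) (z : lp E 1) => ‖z‖ - ∑ i ∈ S, ‖z i‖) 0
      atTop L :=
    Antitone.tendstoUniformlyOn_of_forall_tendsto hL
      (fun S => (continuous_norm.sub (continuous_finsetSum _ fun i _ =>
        (lp.lipschitzWith_one_eval 1 i).continuous.norm)).continuousOn)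
      (fun z _ S S' h => sub_le_sub_left
        (Finset.sum_le_sum_of_subset_of_nonneg h fun _ _ _ => norm_nonneg _) _)
      continuousOn_const
      (fun z _ => by
        simpa using (tendsto_const_nhds (x := ‖z‖)).sub (lp.hasSum_norm (p := 1) (by simp) z))
  obtain ⟨S, hS⟩ := (Metric.tendstoUniformlyOn_iff.1 hτ η hη).exists
  refine ⟨S, fun z hz F hF => ?_⟩
  have h₁ := hS z hz
  have h₂ : ∑ i ∈ F, ‖z i‖ + ∑ i ∈ S, ‖z i‖ ≤ ‖z‖ := by
    classical
    rw [← Finset.sum_union hF]; exact sum_norm_le_norm z _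
  rw [Pi.zero_apply, dist_zero_left, Real.norm_eq_abs] at h₁
  linarith [le_abs_self (‖z‖ - ∑ i ∈ S, ‖z i‖)]

end lp

variable {ι : Type*}

lemma prod_pow_self_pos (k : ι →₀ ℕ) : 0 < k.prod fun _ e => (e : ℝ) ^ e :=
  Finset.prod_pos fun _ hn =>
    pow_pos (Nat.cast_pos.2 (Nat.pos_of_ne_zero (Finsupp.mem_support_iff.1 hn))) _

lemma prod_pow_nonneg (k : ι →₀ ℕ) {x : ι → ℝ} (hx : 0 ≤ x) : 0 ≤ k.prod fun n e => x n ^ e :=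
  Finset.prod_nonneg fun n _ => pow_nonneg (hx n) _

lemma prod_mul_pow (k : ι →₀ ℕ) (c : ℝ) (x : ι → ℝ) :
    (k.prod fun n e => (c * x n) ^ e) = c ^ k.degree * k.prod fun n e => x n ^ e := by
  simp only [Finsupp.prod, mul_pow, Finset.prod_mul_distrib, Finset.prod_pow_eq_pow_sum,
    degree_apply]

lemma filter_filter_not_injective {M : Type*} [AddCommMonoid M] (p : ι → Prop)
    [DecidablePred p] : Function.Injective fun k : ι →₀ M => (k.filter p, k.filter (¬ p ·)) :=
  fun k k' h => by
    rw [← filter_add_filter_not k p, ← filter_add_filter_not k' p]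
    exact congrArg₂ (· + ·) (Prod.ext_iff.1 h).1 (Prod.ext_iff.1 h).2

lemma card_support_le_degree (k : ι →₀ ℕ) : #k.support ≤ k.degree := by
  rw [degree_apply, Finset.card_eq_sum_ones]
  exact Finset.sum_le_sum fun n hn => Nat.one_le_iff_ne_zero.2 (Finsupp.mem_support_iff.1 hn)

lemma sum_pow_degree_le [DecidableEq ι] {x : ℝ} (hx₀ : 0 ≤ x) (hx₁ : x < 1) (s : Finset ι)
    (u : Finset (ι →₀ ℕ)) (hu : ∀ k ∈ u, k.support ⊆ s) :
    ∑ k ∈ u, x ^ k.degree ≤ (1 - x)⁻¹ ^ #s := by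
  induction s using Finset.induction_on generalizing u with
  | empty =>
    have hu0 : u ⊆ {0} := fun k hk =>
      Finset.mem_singleton.2 (support_eq_empty.1 (Finset.subset_empty.1 (hu k hk)))
    calc ∑ k ∈ u, x ^ k.degree ≤ ∑ k ∈ ({0} : Finset (ι →₀ ℕ)), x ^ k.degree :=
          Finset.sum_le_sum_of_subset_of_nonneg hu0 fun _ _ _ => pow_nonneg hx₀ _
      _ = (1 - x)⁻¹ ^ #(∅ : Finset ι) := by simp
  | insert a s ha ih =>
    have hsplit : ∀ k : ι →₀ ℕ, x ^ k.degree = x ^ k a * x ^ (k.erase a).degree := fun k => by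
      conv_lhs => rw [← single_add_erase a k]
      rw [map_add, degree_single, pow_add]
    have hinj : Set.InjOn (fun k : ι →₀ ℕ => (k a, k.erase a)) u := fun k _ k' _ h => by
      obtain ⟨h₁, h₂⟩ := Prod.ext_iff.1 h
      rw [← single_add_erase a k, ← single_add_erase a k']
      simp only at h₁ h₂
      rw [h₁, h₂]
    have herase : ∀ k' ∈ u.image (Finsupp.erase a), k'.support ⊆ s := by
      intro k' hk'
      obtain ⟨k, hk, rfl⟩ := Finset.mem_image.1 hk'
      intro n hn
      rw [support_erase, Finset.mem_erase] at hn
      exact (Finset.mem_insert.1 (hu k hk hn.2)).resolve_left hn.1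
    calc ∑ k ∈ u, x ^ k.degree = ∑ k ∈ u, x ^ k a * x ^ (k.erase a).degree :=
          Finset.sum_congr rfl fun k _ => hsplit k
      _ ≤ (∑ j ∈ u.image (· a), x ^ j) * ∑ k' ∈ u.image (Finsupp.erase a), x ^ k'.degree :=
          sum_mul_le_sum_image_mul_sum_image (f := (x ^ ·)) (g := (x ^ degree ·)) hinj
            (fun _ => pow_nonneg hx₀ _)
            fun _ => pow_nonneg hx₀ _
      _ ≤ (1 - x)⁻¹ * (1 - x)⁻¹ ^ #s :=
          mul_le_mul (sum_geometric_le hx₀ hx₁ _) (ih _ herase)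
            (Finset.sum_nonneg fun _ _ => pow_nonneg hx₀ _) (inv_nonneg.2 (sub_nonneg.2 hx₁.le))
      _ = (1 - x)⁻¹ ^ #(insert a s) := by rw [Finset.card_insert_of_notMem ha, pow_succ']

/-- The coefficient `‖k‖^‖k‖ / k^k` of Lempert's `Δ`. -/
noncomputable def deltaCoeff (k : ι →₀ ℕ) : ℝ :=
  (k.degree : ℝ) ^ k.degree / k.prod fun _ e => (e : ℝ) ^ e

lemma deltaCoeff_nonneg (k : ι →₀ ℕ) : 0 ≤ deltaCoeff k :=
  div_nonneg (by positivity) (prod_pow_self_pos k).le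

/-- Weighted AM-GM with weights `k n / ‖k‖`. -/
lemma deltaCoeff_mul_prod_le (k : ι →₀ ℕ) {x : ι → ℝ} (hx : 0 ≤ x) :
    deltaCoeff k * (k.prod fun n e => x n ^ e) ≤ (∑ n ∈ k.support, x n) ^ k.degree := by
  rcases Nat.eq_zero_or_pos k.degree with h0 | hpos
  · obtain rfl : k = 0 := (degree_eq_zero_iff k).1 h0
    simp [deltaCoeff]
  set m := k.degree with hm
  have hm' : (0 : ℝ) < m := by exact_mod_cast hpos
  have hk : ∀ n ∈ k.support, (0 : ℝ) < k n := fun n hn =>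
    Nat.cast_pos.2 (Nat.pos_of_ne_zero (Finsupp.mem_support_iff.1 hn))
  set z : ι → ℝ := fun n => m * x n / k n
  have hz : ∀ n ∈ k.support, 0 ≤ z n := fun n hn =>
    div_nonneg (mul_nonneg hm'.le (hx n)) (hk n hn).le
  have amgm := Real.geom_mean_le_arith_mean_weighted k.support (fun n => (k n : ℝ) / m) z
    (fun n _ => by positivity)
    (by rw [← Finset.sum_div, ← Nat.cast_sum, ← degree_apply, div_self hm'.ne'])
    hz
  have hsum : ∑ n ∈ k.support, (k n : ℝ) / m * z n = ∑ n ∈ k.support, x n :=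
    Finset.sum_congr rfl fun n hn => by simp only [z]; field_simp [(hk n hn).ne']
  have hpow : (∏ n ∈ k.support, z n ^ ((k n : ℝ) / m)) ^ m = ∏ n ∈ k.support, z n ^ k n := by
    rw [← Finset.prod_pow]
    refine Finset.prod_congr rfl fun n hn => ?_
    rw [← Real.rpow_natCast, ← Real.rpow_mul (hz n hn), div_mul_cancel₀ _ hm'.ne',
      Real.rpow_natCast]
  have hprod : deltaCoeff k * (k.prod fun n e => x n ^ e) = ∏ n ∈ k.support, z n ^ k n := by
    simp only [deltaCoeff, Finsupp.prod, z, div_pow, mul_pow, Finset.prod_div_distrib,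
      Finset.prod_mul_distrib, Finset.prod_pow_eq_pow_sum, ← degree_apply, ← hm]
    ring
  rw [hprod, ← hpow, ← hsum]
  exact pow_le_pow_left₀ (Finset.prod_nonneg fun n hn => Real.rpow_nonneg (hz n hn) _) amgm m

lemma deltaCoeff_le_exp_mul_multinomial (k : ι →₀ ℕ) :
    deltaCoeff k ≤ exp k.degree * k.multinomial := by
  rw [deltaCoeff, div_le_iff₀ (prod_pow_self_pos k)]
  have hspec : ((k.degree.factorial : ℕ) : ℝ) =
      k.multinomial * ∏ n ∈ k.support, ((k n).factorial : ℝ) := by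
    rw [degree_apply, ← Nat.multinomial_spec k.support k, Finsupp.multinomial_eq]
    push_cast; ring
  calc (k.degree : ℝ) ^ k.degree
      ≤ exp k.degree * k.degree.factorial := by
        have := Real.pow_div_factorial_le_exp (k.degree : ℝ) (by positivity) k.degree
        rwa [div_le_iff₀ (by positivity)] at this
    _ ≤ exp k.degree * k.multinomial * k.prod fun _ e => (e : ℝ) ^ e := by
        rw [hspec, ← mul_assoc]
        refine mul_le_mul_of_nonneg_left (Finset.prod_le_prod (fun _ _ => by positivity)
          fun n _ => by dsimp only; exact_mod_cast Nat.factorial_le_pow (k n)) (by positivity)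

lemma deltaCoeff_add_le {a b : ι →₀ ℕ} (hab : Disjoint a.support b.support) {δ : ℝ}
    (hδ₀ : 0 < δ) (hδ₁ : δ ≤ 1) :
    deltaCoeff (a + b) ≤
      exp δ ^ a.degree * (exp 1 / δ) ^ b.degree * (deltaCoeff a * deltaCoeff b) := by
  have ha := prod_pow_self_pos a
  have hb := prod_pow_self_pos b
  rw [deltaCoeff, map_add, prod_add_index_of_disjoint hab]
  calc _ ≤ exp δ ^ a.degree * (exp 1 / δ) ^ b.degree *
        ((a.degree : ℝ) ^ a.degree * (b.degree : ℝ) ^ b.degree) /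
        ((a.prod fun _ e => (e : ℝ) ^ e) * b.prod fun _ e => (e : ℝ) ^ e) := by
        gcongr
        exact cast_add_pow_add_le hδ₀ hδ₁ _ _
    _ = _ := by rw [deltaCoeff, deltaCoeff]; field_simp

/-- The term `‖b‖! / b! * y^b` of the multinomial expansion of `(∑ n, y n)^‖b‖`. -/
noncomputable def multinomialTerm (y : ι → ℝ) (b : ι →₀ ℕ) : ℝ :=
  b.multinomial * b.prod fun n e => y n ^ e

lemma multinomialTerm_nonneg {y : ι → ℝ} (hy : 0 ≤ y) (b : ι →₀ ℕ) : 0 ≤ multinomialTerm y b :=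
  mul_nonneg (Nat.cast_nonneg _) (prod_pow_nonneg b hy)

lemma sum_multinomialTerm_finsuppAntidiag [DecidableEq ι] (s : Finset ι) (y : ι → ℝ) (l : ℕ) :
    ∑ b ∈ s.finsuppAntidiag l, multinomialTerm y b = (∑ n ∈ s, y n) ^ l := by
  rw [Finset.sum_pow_eq_sum_piAntidiag]
  refine Finset.sum_nbij (⇑) (fun b hb => ?_) (fun b _ b' _ h => DFunLike.coe_injective h)
    (fun f hf => ?_) (fun b hb => ?_)
  · obtain ⟨hsum, hsupp⟩ := mem_finsuppAntidiag.1 hb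
    exact Finset.mem_piAntidiag.2 ⟨hsum, fun n hn => hsupp (Finsupp.mem_support_iff.2 hn)⟩
  · obtain ⟨hsum, hsupp⟩ := Finset.mem_piAntidiag.1 hf
    refine ⟨Finsupp.onFinset s f hsupp, mem_finsuppAntidiag.2 ⟨hsum, support_onFinset_subset⟩, ?_⟩
    exact coe_onFinset _ _ _
  · have hbs := (mem_finsuppAntidiag.1 hb).2
    rw [multinomialTerm, Finsupp.multinomial_eq_of_support_subset hbs,
      Finsupp.prod_of_support_subset b hbs _ fun _ _ => pow_zero _]

/-- By the multinomial theorem, the degree `l` part of the sum is at most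
`(∑ n ∈ F, y n)^l - (∑ n ∈ F ∩ S, y n)^l`. -/
lemma sum_multinomialTerm_le [DecidableEq ι] {y : ι → ℝ} (hy : 0 ≤ y) {F S : Finset ι}
    (hF : ∑ n ∈ F, y n ≤ 1 / 2) (v : Finset (ι →₀ ℕ))
    (hv : ∀ b ∈ v, b.support ⊆ F ∧ ¬ b.support ⊆ S) :
    ∑ b ∈ v, multinomialTerm y b ≤ 4 * ∑ n ∈ F \ S, y n := by
  have hFS : ∑ n ∈ F \ S, y n = ∑ n ∈ F, y n - ∑ n ∈ F ∩ S, y n := by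
    rw [← Finset.sum_inter_add_sum_sdiff F S]; ring
  have hinter : ∑ n ∈ F ∩ S, y n ≤ ∑ n ∈ F, y n :=
    Finset.sum_le_sum_of_subset_of_nonneg Finset.inter_subset_left fun n _ _ => hy n
  have hfiber : ∀ l, ∑ b ∈ v with b.degree = l, multinomialTerm y b ≤
      (∑ n ∈ F, y n) ^ l - (∑ n ∈ F ∩ S, y n) ^ l := by
    intro l
    rw [← sum_multinomialTerm_finsuppAntidiag, ← sum_multinomialTerm_finsuppAntidiag,
      ← Finset.sum_sdiff (finsuppAntidiag_mono Finset.inter_subset_left l), add_sub_cancel_right]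
    refine Finset.sum_le_sum_of_subset_of_nonneg (fun b hb => ?_)
      fun b _ _ => multinomialTerm_nonneg hy b
    obtain ⟨hbv, rfl⟩ := Finset.mem_filter.1 hb
    obtain ⟨hbF, hbS⟩ := hv b hbv
    simp only [Finset.mem_sdiff, mem_finsuppAntidiag', Finset.subset_inter_iff]
    exact ⟨⟨rfl, hbF⟩, fun h => hbS h.2.2⟩
  rw [← Finset.sum_fiberwise_of_maps_to (g := degree) (t := range (v.sup degree + 1))
    fun b hb => Finset.mem_range.2 (Nat.lt_succ_of_le (Finset.le_sup hb)), hFS]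
  exact (Finset.sum_le_sum fun l _ => hfiber l).trans
    (sum_range_pow_sub_pow_le (Finset.sum_nonneg fun n _ => hy n) hinter hF _)

/-- The term `‖k‖^‖k‖ / k^k * q^#k * x^k` of `Δ(q, z)`, for `x n = |z n|`. -/
noncomputable def deltaTerm (k : ι →₀ ℕ) (q : ℝ) (x : ι → ℝ) : ℝ :=
  deltaCoeff k * q ^ #k.support * k.prod fun n e => x n ^ e

section deltaTerm

variable {k : ι →₀ ℕ} {q C r c δ : ℝ} {x : ι → ℝ}

lemma deltaTerm_nonneg (hq : 0 ≤ q) (hx : 0 ≤ x) : 0 ≤ deltaTerm k q x :=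
  mul_nonneg (mul_nonneg (deltaCoeff_nonneg k) (pow_nonneg hq _)) (prod_pow_nonneg k hx)

lemma deltaTerm_le_deltaTerm_of_le (hq : 0 ≤ q) (hqC : q ≤ C) (hx : 0 ≤ x) :
    deltaTerm k q x ≤ deltaTerm k C x := by
  have := deltaCoeff_nonneg k
  have := prod_pow_nonneg k hx
  unfold deltaTerm
  gcongr

lemma deltaTerm_le_of_support_subset {s : Finset ι} (hC : 1 ≤ C) (hx : 0 ≤ x)
    (hks : k.support ⊆ s) (hsr : ∑ n ∈ s, x n ≤ r) :
    deltaTerm k C x ≤ C ^ #s * r ^ k.degree := by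
  have hsupp : ∑ n ∈ k.support, x n ≤ r :=
    (Finset.sum_le_sum_of_subset_of_nonneg hks fun n _ _ => hx n).trans hsr
  calc deltaTerm k C x = C ^ #k.support * (deltaCoeff k * k.prod fun n e => x n ^ e) := by
        rw [deltaTerm]; ring
    _ ≤ C ^ #s * r ^ k.degree := by
        gcongr
        · exact mul_nonneg (deltaCoeff_nonneg k) (prod_pow_nonneg k hx)
        · exact (deltaCoeff_mul_prod_le k hx).trans
            (pow_le_pow_left₀ (Finset.sum_nonneg fun n _ => hx n) hsupp _)

lemma deltaTerm_add_le {a b : ι →₀ ℕ} (hab : Disjoint a.support b.support) (hδ₀ : 0 < δ)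
    (hδ₁ : δ ≤ 1) (hC : 0 ≤ C) (hx : 0 ≤ x) :
    deltaTerm (a + b) C x ≤
      exp δ ^ a.degree * deltaTerm a C x * ((exp 1 / δ) ^ b.degree * deltaTerm b C x) := by
  classical
  have := prod_pow_nonneg a hx
  have := prod_pow_nonneg b hx
  rw [deltaTerm, support_add_eq hab, card_union_of_disjoint hab, pow_add,
    prod_add_index' (fun _ => pow_zero _) fun _ _ _ => pow_add _ _ _]
  calc _ ≤ exp δ ^ a.degree * (exp 1 / δ) ^ b.degree * (deltaCoeff a * deltaCoeff b) *
        (C ^ #a.support * C ^ #b.support) *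
        ((a.prod fun n e => x n ^ e) * b.prod fun n e => x n ^ e) := by
        gcongr
        exact deltaCoeff_add_le hab hδ₀ hδ₁
    _ = _ := by simp only [deltaTerm]; ring

lemma pow_degree_mul_deltaTerm_le (hc : 0 ≤ c) (hC : 1 ≤ C) (hx : 0 ≤ x) :
    c ^ k.degree * deltaTerm k C x ≤ multinomialTerm (fun n => exp 1 * c * C * x n) k := by
  have := prod_pow_nonneg k hx
  rw [multinomialTerm, prod_mul_pow, mul_pow, mul_pow, exp_one_pow, deltaTerm]
  calc _ ≤ c ^ k.degree * (exp k.degree * k.multinomial * C ^ k.degree *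
        k.prod fun n e => x n ^ e) := by
        gcongr
        · exact deltaCoeff_le_exp_mul_multinomial k
        · exact card_support_le_degree k
    _ = _ := by ring

lemma deltaTerm_le_mul_multinomialTerm [DecidableEq ι] (S : Finset ι)
    (hC : 1 ≤ C) (hr : 0 ≤ r) (hx : 0 ≤ x) (hδ₀ : 0 < δ) (hδ₁ : δ ≤ 1)
    (hSr : ∑ n ∈ S, x n ≤ r) :
    deltaTerm k C x ≤ C ^ #S * (exp δ * r) ^ (k.filter (· ∈ S)).degree *
      multinomialTerm (fun n => exp 1 * (exp 1 / δ) * C * x n) (k.filter (· ∉ S)) := by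
  set a := k.filter (· ∈ S)
  set b := k.filter (· ∉ S)
  have hab : Disjoint a.support b.support := by
    simp only [a, b, support_filter]
    exact Finset.disjoint_filter_filter_not _ _ _
  have ha : a.support ⊆ S := by
    simp only [a, support_filter]
    exact fun n hn => (Finset.mem_filter.1 hn).2
  calc deltaTerm k C x = deltaTerm (a + b) C x := by rw [Finsupp.filter_add_filter_not]
    _ ≤ exp δ ^ a.degree * deltaTerm a C x * ((exp 1 / δ) ^ b.degree * deltaTerm b C x) :=
        deltaTerm_add_le hab hδ₀ hδ₁ (zero_le_one.trans hC) hx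
    _ ≤ exp δ ^ a.degree * (C ^ #S * r ^ a.degree) *
          multinomialTerm (fun n => exp 1 * (exp 1 / δ) * C * x n) b := by
        gcongr
        · exact mul_nonneg (by positivity) (deltaTerm_nonneg (zero_le_one.trans hC) hx)
        · exact deltaTerm_le_of_support_subset hC hx ha hSr
        · exact pow_degree_mul_deltaTerm_le (by positivity) hC hx
    _ = _ := by rw [mul_pow]; ring

end deltaTerm

lemma exists_sum_filter_deltaTerm_le [DecidableEq ι] {C r ε : ℝ} (hC : 1 ≤ C) (hr₀ : 0 ≤ r)
    (hr₁ : r < 1) (S : Finset ι) (hε : 0 < ε) :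
    ∃ s₀ : Finset (ι →₀ ℕ), ∀ x : ι → ℝ, 0 ≤ x → ∑ n ∈ S, x n ≤ r →
      ∀ t, Disjoint t s₀ → ∑ k ∈ t with k.support ⊆ S, deltaTerm k C x ≤ ε := by
  set g : (ι →₀ ℕ) → ℝ := fun k => if k.support ⊆ S then C ^ #S * r ^ k.degree else 0
  have hg : 0 ≤ g := fun k => by dsimp only [g]; split_ifs <;> positivity
  have hsum : Summable g := summable_of_sum_le hg (c := C ^ #S * (1 - r)⁻¹ ^ #S) fun u => by
    rw [← Finset.sum_filter, ← Finset.mul_sum]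
    exact mul_le_mul_of_nonneg_left
      (sum_pow_degree_le hr₀ hr₁ S _ fun k hk => (Finset.mem_filter.1 hk).2) (by positivity)
  obtain ⟨s₀, hs₀⟩ := summable_iff_vanishing_norm.1 hsum ε hε
  refine ⟨s₀, fun x hx hxS t ht => ?_⟩
  calc ∑ k ∈ t with k.support ⊆ S, deltaTerm k C x
      ≤ ∑ k ∈ t with k.support ⊆ S, C ^ #S * r ^ k.degree :=
        Finset.sum_le_sum fun k hk =>
          deltaTerm_le_of_support_subset hC hx (Finset.mem_filter.1 hk).2 hxS
    _ = ∑ k ∈ t, g k := Finset.sum_filter _ _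
    _ ≤ ε := (Real.le_norm_self _).trans (hs₀ t ht).le

lemma sum_deltaTerm_le_of_not_support_subset [DecidableEq ι] {C r δ η : ℝ} {x : ι → ℝ}
    {S S' : Finset ι} (hSS' : S ⊆ S') (hC : 1 ≤ C) (hr : 0 ≤ r) (hx : 0 ≤ x) (hδ₀ : 0 < δ)
    (hδ₁ : δ ≤ 1) (hρ : exp δ * r < 1) (hSr : ∑ n ∈ S, x n ≤ r)
    (hfar : ∀ F, Disjoint F S → ∑ n ∈ F, exp 1 * (exp 1 / δ) * C * x n ≤ 1 / 2)
    (hfar' : ∀ F, Disjoint F S' → ∑ n ∈ F, exp 1 * (exp 1 / δ) * C * x n ≤ η)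
    (t : Finset (ι →₀ ℕ)) (ht : ∀ k ∈ t, ¬ k.support ⊆ S') :
    ∑ k ∈ t, deltaTerm k C x ≤ C ^ #S * (1 - exp δ * r)⁻¹ ^ #S * (4 * η) := by
  set y : ι → ℝ := fun n => exp 1 * (exp 1 / δ) * C * x n
  have hy : 0 ≤ y := fun n => mul_nonneg (by positivity) (hx n)
  set head : (ι →₀ ℕ) → ι →₀ ℕ := fun k => k.filter (· ∈ S)
  set tail : (ι →₀ ℕ) → ι →₀ ℕ := fun k => k.filter (· ∉ S)
  have htail : ∀ b ∈ t.image tail, b.support ⊆ t.biUnion Finsupp.support \ S ∧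
      ¬ b.support ⊆ S' := by
    intro b hb
    obtain ⟨k, hk, rfl⟩ := Finset.mem_image.1 hb
    obtain ⟨n, hn, hnS'⟩ := Finset.not_subset.1 (ht k hk)
    simp only [tail, support_filter, Finset.subset_iff, Finset.mem_filter, Finset.mem_sdiff,
      Finset.mem_biUnion, not_forall]
    exact ⟨fun m hm => ⟨⟨k, hk, hm.1⟩, hm.2⟩, n, ⟨hn, fun hnS => hnS' (hSS' hnS)⟩, hnS'⟩
  calc ∑ k ∈ t, deltaTerm k C x
      ≤ ∑ k ∈ t, C ^ #S * (exp δ * r) ^ (head k).degree * multinomialTerm y (tail k) :=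
        Finset.sum_le_sum fun k _ => deltaTerm_le_mul_multinomialTerm S hC hr hx hδ₀ hδ₁ hSr
    _ ≤ (∑ a ∈ t.image head, C ^ #S * (exp δ * r) ^ a.degree) *
          ∑ b ∈ t.image tail, multinomialTerm y b :=
        sum_mul_le_sum_image_mul_sum_image (f := fun a => C ^ #S * (exp δ * r) ^ a.degree)
          (filter_filter_not_injective (· ∈ S)).injOn (fun _ => by positivity)
          (multinomialTerm_nonneg hy)
    _ ≤ C ^ #S * (1 - exp δ * r)⁻¹ ^ #S * (4 * η) := by
        rw [← Finset.mul_sum]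
        gcongr
        · exact Finset.sum_nonneg fun b _ => multinomialTerm_nonneg hy b
        · refine sum_pow_degree_le (by positivity) hρ S _ fun a ha => ?_
          obtain ⟨k, -, rfl⟩ := Finset.mem_image.1 ha
          simp only [head, support_filter]
          exact fun n hn => (Finset.mem_filter.1 hn).2
        · exact (sum_multinomialTerm_le hy (hfar _ Finset.sdiff_disjoint) _ htail).trans
            (by gcongr; exact hfar' _ Finset.sdiff_disjoint)

theorem exists_sum_deltaTerm_le [DecidableEq ι] {α : Type*} {K : Set α} {x : α → ι → ℝ}
    {C r : ℝ} (hC : 1 ≤ C) (hr₀ : 0 ≤ r) (hr₁ : r < 1) (hx : ∀ p ∈ K, 0 ≤ x p)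
    (hxr : ∀ p ∈ K, ∀ F, ∑ n ∈ F, x p n ≤ r)
    (htail : ∀ η > 0, ∃ S : Finset ι, ∀ p ∈ K, ∀ F, Disjoint F S → ∑ n ∈ F, x p n ≤ η)
    {ε : ℝ} (hε : 0 < ε) :
    ∃ s₀ : Finset (ι →₀ ℕ), ∀ p ∈ K, ∀ t, Disjoint t s₀ → ∑ k ∈ t, deltaTerm k C (x p) ≤ ε := by
  obtain ⟨δ, hδ₀, hδ₁, hρ⟩ := exists_exp_mul_lt_one hr₀ hr₁
  set G := exp 1 * (exp 1 / δ) * C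
  have hG : 0 < G := by positivity
  have hGtail : ∀ η > 0, ∃ S : Finset ι, ∀ p ∈ K, ∀ F, Disjoint F S →
      ∑ n ∈ F, G * x p n ≤ η := fun η hη => by
    obtain ⟨S, hS⟩ := htail (η / G) (by positivity)
    exact ⟨S, fun p hp F hF => by rw [← Finset.mul_sum, ← le_div_iff₀' hG]; exact hS p hp F hF⟩
  obtain ⟨S, hS⟩ := hGtail (1 / 2) (by norm_num)
  set H := C ^ #S * (1 - exp δ * r)⁻¹ ^ #S
  have hH : 0 < H := by have := sub_pos.2 hρ; positivity
  obtain ⟨S'', hS''⟩ := hGtail (ε / (8 * H)) (by positivity)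
  obtain ⟨s₀, hs₀⟩ := exists_sum_filter_deltaTerm_le hC hr₀ hr₁ (S ∪ S'') (half_pos hε)
  refine ⟨s₀, fun p hp t ht => ?_⟩
  rw [← Finset.sum_filter_add_sum_filter_not t (·.support ⊆ S ∪ S'')]
  have hfar := sum_deltaTerm_le_of_not_support_subset Finset.subset_union_left hC hr₀ (hx p hp)
    hδ₀ hδ₁ hρ (hxr p hp S) (hS p hp)
    (fun F hF => hS'' p hp F (Finset.disjoint_union_right.1 hF).2) (t.filter _)
    fun k hk => (Finset.mem_filter.1 hk).2
  have hH8 : H * (4 * (ε / (8 * H))) = ε / 2 := by field_simp; ring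
  linarith [hs₀ (x p) (hx p hp) (hxr p hp _) t ht]

end LempertDelta

open LempertDelta

/-- The series defining Lempert's dominating function
`Δ(q,z) = ∑_k (‖k‖^{‖k‖}/k^k) |q|^{#k} |z^k|` converges uniformly on compact subsets of
`ℂ × B_{l¹}(1)` (uniform convergence of the net of finite partial sums). -/
theorem Delta_series_unif_conv_on_compacts
    (term : (ℕ →₀ ℕ) → ℂ × lp (fun _ : ℕ => ℂ) 1 → ℝ)
    (hterm : ∀ k p, term k p =
      (((k.sum fun _ v => v : ℕ) : ℝ) ^ (k.sum fun _ v => v : ℕ) /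
          ∏ n ∈ k.support, (k n : ℝ) ^ k n) *
        ‖p.1‖ ^ k.support.card *
        ∏ n ∈ k.support, ‖p.2 n‖ ^ k n) :
    ∀ K : Set (ℂ × lp (fun _ : ℕ => ℂ) 1),
      IsCompact K → K ⊆ {p | ‖p.2‖ < 1} →
      TendstoUniformlyOn
        (fun (s : Finset (ℕ →₀ ℕ)) (p : ℂ × lp (fun _ : ℕ => ℂ) 1) => ∑ k ∈ s, term k p)
        (fun p => ∑' k : ℕ →₀ ℕ, term k p) atTop K := by
  intro K hK hK₁
  rcases K.eq_empty_or_nonempty with rfl | hK₀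
  · exact tendstoUniformlyOn_empty
  obtain ⟨p₀, hp₀, hr⟩ := hK.exists_isMaxOn hK₀ continuous_snd.norm.continuousOn
  obtain ⟨C, hC⟩ := hK.exists_bound_of_continuousOn continuous_fst.continuousOn
  have hterm' : ∀ k p, term k p = deltaTerm k ‖p.1‖ (‖p.2 ·‖) := fun k p => by rw [hterm]; rfl
  refine tendstoUniformlyOn_tsum_of_vanishing fun ε hε => ?_
  obtain ⟨s₀, hs₀⟩ := exists_sum_deltaTerm_le (K := K) (x := fun p n => ‖p.2 n‖)
    (le_max_left 1 C) (norm_nonneg _) (hK₁ hp₀) (fun p _ n => norm_nonneg _)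
    (fun p hp F => (sum_norm_le_norm p.2 F).trans (hr hp))
    (fun η hη => by
      obtain ⟨S, hS⟩ := exists_sum_norm_le_of_isCompact (hK.image continuous_snd) hη
      exact ⟨S, fun p hp => hS p.2 (Set.mem_image_of_mem _ hp)⟩) hε
  refine ⟨s₀, fun p hp t ht => ?_⟩
  simp only [hterm']
  rw [Real.norm_of_nonneg (Finset.sum_nonneg fun k _ => deltaTerm_nonneg (norm_nonneg _)
    fun n => norm_nonneg _)]
  exact (Finset.sum_le_sum fun k _ => deltaTerm_le_deltaTerm_of_le (norm_nonneg _)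
    ((hC p hp).trans (le_max_right 1 C)) fun n => norm_nonneg _).trans (hs₀ p hp t ht)
end

section
/- For each 0 < θ < 1 there exists ε > 0 such that Δ(q,z) = ∑_k (‖k‖^{‖k‖}/k^k) |q|^{#k} |z^k| is bounded on {q ∈ ℂ : |q| < ε} × {z ∈ l¹ : ‖z‖₁ ≤ θ}. -/
/-!
The exponential series gives `N^N ≤ N! e^N`, and Stirling's monotone sequence gives
`k! e^k ≤ e √k k^k`; hence `‖k‖^‖k‖ / k^k` is at most the multinomial coefficient of `k` times
`∏ₙ e k_n`. Bernoulli's inequality `k (r - 1) ≤ r^k` for `r > 1` lets each factor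
`|q| ≤ (r - 1) / e` of `|q|^{#k}` absorb one factor `e k_n`, so the `k`-th term is at most
`multinomial k · ∏ₙ (r |z_n|)^{k_n}`. By the multinomial theorem the terms of degree `N` sum to
at most `(r ‖z‖₁)^N`, and for `1 < r < 1/θ` the geometric series bounds the whole sum by
`(1 - rθ)⁻¹`.
-/

open Real Finset
open scoped Nat

theorem factorial_mul_exp_le_exp_one_mul_sqrt_mul_pow (n : ℕ) (hn : n ≠ 0) :
    (n ! : ℝ) * exp n ≤ exp 1 * √n * n ^ n := by
  obtain ⟨m, rfl⟩ := Nat.exists_eq_add_one_of_ne_zero hn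
  have h : Stirling.stirlingSeq (m + 1) ≤ exp 1 / √2 := by
    simpa using Stirling.stirlingSeq'_antitone (Nat.zero_le m)
  rw [Stirling.stirlingSeq, div_le_div_iff₀ (by positivity) (by positivity),
    Real.sqrt_mul zero_le_two, div_pow] at h
  rw [← Real.exp_one_pow, ← le_div_iff₀ (by positivity)]
  refine le_of_mul_le_mul_right ?_ (by positivity : (0:ℝ) < √2)
  convert h using 1
  ring

theorem factorial_mul_exp_mul_le_pow_mul_pow {r a : ℝ} (hr : 1 < r) (ha : a ≤ (r - 1) / exp 1)
    {n : ℕ} (hn : n ≠ 0) : (n ! : ℝ) * exp n * a ≤ r ^ n * n ^ n := by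
  have hsqrt : √(n : ℝ) ≤ n :=
    Real.sqrt_le_self_iff.mpr (Or.inr (Nat.one_le_cast.mpr (Nat.one_le_iff_ne_zero.mpr hn)))
  have hbernoulli : n * (r - 1) ≤ r ^ n := by
    have := one_add_mul_le_pow (a := r - 1) (by linarith) n
    rw [add_sub_cancel] at this
    linarith
  calc (n ! : ℝ) * exp n * a ≤ n ! * exp n * ((r - 1) / exp 1) := by gcongr
    _ ≤ exp 1 * √n * n ^ n * ((r - 1) / exp 1) :=
        mul_le_mul_of_nonneg_right (factorial_mul_exp_le_exp_one_mul_sqrt_mul_pow n hn)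
          (div_nonneg (by linarith) (exp_pos 1).le)
    _ = √n * (r - 1) * n ^ n := by field_simp
    _ ≤ n * (r - 1) * n ^ n := by gcongr
    _ ≤ r ^ n * n ^ n := by gcongr

theorem pow_sum_le_multinomial_mul_prod {α : Type*} (s : Finset α) (f : α → ℕ) :
    ((∑ i ∈ s, f i : ℕ) : ℝ) ^ (∑ i ∈ s, f i) ≤
      Nat.multinomial s f * ∏ i ∈ s, ((f i)! * exp (f i)) := by
  calc ((∑ i ∈ s, f i : ℕ) : ℝ) ^ (∑ i ∈ s, f i)
      ≤ (∑ i ∈ s, f i)! * exp (∑ i ∈ s, f i : ℕ) := by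
        rw [← div_le_iff₀' (by positivity)]
        exact Real.pow_div_factorial_le_exp _ (Nat.cast_nonneg _) _
    _ = Nat.multinomial s f * ∏ i ∈ s, ((f i)! * exp (f i)) := by
        rw [← Nat.multinomial_spec, Nat.cast_sum, Real.exp_sum, prod_mul_distrib]
        push_cast
        ring

theorem pow_degree_div_prod_mul_le_multinomial_mul_prod {α : Type*} {r a : ℝ} (hr : 1 < r)
    (ha0 : 0 ≤ a) (ha : a ≤ (r - 1) / exp 1) (k : α →₀ ℕ) {x : α → ℝ} (hx : ∀ i, 0 ≤ x i) :
    ((k.degree : ℝ) ^ k.degree / ∏ i ∈ k.support, (k i : ℝ) ^ k i) * a ^ k.support.card *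
        ∏ i ∈ k.support, x i ^ k i ≤
      k.multinomial * ∏ i ∈ k.support, (r * x i) ^ k i := by
  have hpos : 0 < ∏ i ∈ k.support, (k i : ℝ) ^ k i :=
    prod_pos fun i hi => pow_pos (Nat.cast_pos.mpr (Nat.pos_of_ne_zero (by simpa using hi))) _
  rw [div_mul_eq_mul_div, div_mul_eq_mul_div, div_le_iff₀ hpos, Finsupp.multinomial_eq]
  calc (k.degree : ℝ) ^ k.degree * a ^ k.support.card * ∏ i ∈ k.support, x i ^ k i
      = (k.degree : ℝ) ^ k.degree * ∏ i ∈ k.support, a * x i ^ k i := by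
        rw [prod_mul_distrib, prod_const, mul_assoc]
    _ ≤ (Nat.multinomial k.support k * ∏ i ∈ k.support, ((k i)! * exp (k i))) *
          ∏ i ∈ k.support, a * x i ^ k i := by
        gcongr
        · exact prod_nonneg fun i _ => mul_nonneg ha0 (pow_nonneg (hx i) _)
        · exact pow_sum_le_multinomial_mul_prod k.support k
    _ = Nat.multinomial k.support k *
          ∏ i ∈ k.support, ((k i)! * exp (k i) * a) * x i ^ k i := by
        rw [mul_assoc, ← prod_mul_distrib]
        simp only [mul_assoc]
    _ ≤ Nat.multinomial k.support k *
          ∏ i ∈ k.support, (r ^ k i * k i ^ k i) * x i ^ k i := by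
        gcongr _ * ∏ i ∈ _, ?_ * _ with i hi
        · exact fun i _ => mul_nonneg (by positivity) (pow_nonneg (hx i) _)
        · exact pow_nonneg (hx i) _
        · exact factorial_mul_exp_mul_le_pow_mul_pow hr ha (by simpa using hi)
    _ = Nat.multinomial k.support k * (∏ i ∈ k.support, (r * x i) ^ k i) *
          ∏ i ∈ k.support, (k i : ℝ) ^ k i := by
        rw [mul_assoc, ← prod_mul_distrib]
        congr 1
        exact prod_congr rfl fun i _ => by ring

theorem sum_multinomial_mul_prod_le_pow {α : Type*} (s : Finset (α →₀ ℕ)) {T : Finset α}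
    (hT : ∀ k ∈ s, k.support ⊆ T) {N : ℕ} (hN : ∀ k ∈ s, k.degree = N) {y : α → ℝ}
    (hy : ∀ i, 0 ≤ y i) :
    ∑ k ∈ s, (k.multinomial : ℝ) * ∏ i ∈ k.support, y i ^ k i ≤ (∑ i ∈ T, y i) ^ N := by
  classical
  have hterm : ∀ k ∈ s, (k.multinomial : ℝ) * ∏ i ∈ k.support, y i ^ k i =
      Nat.multinomial T k * ∏ i ∈ T, y i ^ k i := fun k hk => by
    rw [Finsupp.multinomial_eq_of_support_subset (hT k hk),
      prod_subset (hT k hk) fun i _ hi => by rw [Finsupp.notMem_support_iff.mp hi, pow_zero]]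
  calc _ = ∑ g ∈ s.map ⟨DFunLike.coe, DFunLike.coe_injective⟩,
        (Nat.multinomial T g : ℝ) * ∏ i ∈ T, y i ^ g i := by
        rw [sum_congr rfl hterm, sum_map]; rfl
    _ ≤ ∑ g ∈ piAntidiag T N, (Nat.multinomial T g : ℝ) * ∏ i ∈ T, y i ^ g i :=
        sum_le_sum_of_subset_of_nonneg ?_ fun g _ _ =>
          mul_nonneg (Nat.cast_nonneg _) (prod_nonneg fun i _ => pow_nonneg (hy i) _)
    _ = (∑ i ∈ T, y i) ^ N := (sum_pow_eq_sum_piAntidiag T y N).symm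
  intro g hg
  obtain ⟨k, hk, rfl⟩ := mem_map.mp hg
  refine mem_piAntidiag.mpr ⟨?_, fun i hi => hT k hk (Finsupp.mem_support_iff.mpr hi)⟩
  rw [← hN k hk, Finsupp.degree_apply]
  exact (sum_subset (hT k hk) fun i _ hi => Finsupp.notMem_support_iff.mp hi).symm

theorem sum_multinomial_mul_prod_le_inv_one_sub {α : Type*} (s : Finset (α →₀ ℕ))
    {y : α → ℝ} (hy : ∀ i, 0 ≤ y i) {σ : ℝ} (hσ : σ < 1) (hyσ : ∀ T : Finset α, ∑ i ∈ T, y i ≤ σ) :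
    ∑ k ∈ s, (k.multinomial : ℝ) * ∏ i ∈ k.support, y i ^ k i ≤ (1 - σ)⁻¹ := by
  classical
  have hσ0 : 0 ≤ σ := by simpa using hyσ ∅
  set T := s.sup Finsupp.support
  set D := s.sup fun k => k.degree
  rw [← sum_fiberwise_of_maps_to (g := fun k => k.degree) (t := range (D + 1))
    fun k hk => mem_range_succ_iff.mpr (le_sup (f := fun k => k.degree) hk)]
  calc _ ≤ ∑ N ∈ range (D + 1), σ ^ N := by
        refine sum_le_sum fun N _ => ?_
        refine (sum_multinomial_mul_prod_le_pow _ (fun k hk => le_sup (mem_filter.mp hk).1)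
          (fun k hk => (mem_filter.mp hk).2) hy).trans ?_
        exact pow_le_pow_left₀ (sum_nonneg fun i _ => hy i) (hyσ T) N
    _ ≤ (1 - σ)⁻¹ := by
        simpa [← Nat.Ico_zero_eq_range] using
          geom_sum_Ico_le_of_lt_one hσ0 hσ (m := 0) (n := D + 1)

/-- For each `0 < θ < 1` there is `ε > 0` such that
`Δ(q,z) = ∑_k (‖k‖^{‖k‖}/k^k) |q|^{#k} |z^k|` is bounded on
`{|q| < ε} × {‖z‖₁ ≤ θ}` (all finite partial sums are bounded by a common constant `M`). -/
theorem Delta_bounded_near_zero (θ : ℝ) (hθ0 : 0 < θ) (hθ1 : θ < 1) :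
    ∃ ε : ℝ, 0 < ε ∧ ∃ M : ℝ,
      ∀ (q : ℂ) (z : lp (fun _ : ℕ => ℂ) 1), ‖q‖ < ε → ‖z‖ ≤ θ →
        ∀ s : Finset (ℕ →₀ ℕ),
          (∑ k ∈ s,
            (((k.sum fun _ v => v : ℕ) : ℝ) ^ (k.sum fun _ v => v : ℕ) /
                ∏ n ∈ k.support, (k n : ℝ) ^ k n) *
              ‖q‖ ^ k.support.card *
              ∏ n ∈ k.support, ‖z n‖ ^ k n) ≤ M := by
  obtain ⟨r, hr1, hr_lt⟩ := exists_between (one_lt_one_div hθ0 hθ1)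
  have hrθ : r * θ < 1 := (lt_div_iff₀ hθ0).mp hr_lt
  refine ⟨(r - 1) / exp 1, div_pos (sub_pos.mpr hr1) (exp_pos 1), (1 - r * θ)⁻¹,
    fun q z hq hz s => ?_⟩
  have hzT : ∀ T : Finset ℕ, ∑ n ∈ T, r * ‖z n‖ ≤ r * θ := fun T => by
    rw [← mul_sum]
    gcongr
    have hsum : ∑ n ∈ T, ‖z n‖ ≤ ‖z‖ := by
      simpa using lp.sum_rpow_le_norm_rpow (p := 1) (by norm_num) z T
    exact hsum.trans hz
  calc _ ≤ ∑ k ∈ s, (k.multinomial : ℝ) * ∏ n ∈ k.support, (r * ‖z n‖) ^ k n :=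
        sum_le_sum fun k _ =>
          pow_degree_div_prod_mul_le_multinomial_mul_prod hr1 (norm_nonneg q) hq.le k
            fun n => norm_nonneg (z n)
    _ ≤ (1 - r * θ)⁻¹ :=
        sum_multinomial_mul_prod_le_inv_one_sub s (fun n => by positivity) hrθ hzT
end

section
/- Let f : B_X(R) → ℂ be holomorphic on the ball of radius R in the l¹-sum X of finite dimensional Banach spaces, and let f_k(x) = ∫_T f(e^{2πit}x) e^{-2πi(k·t)} dt be its k-homogeneous components. Then for every sequence σ with 0 ≤ σ_n < 1, σ_n → 0, we have sup_k [f_k] σ^k R^{‖k‖} < ∞, where [f_k] = sup_{‖x‖≤1} |f_k(x)|. -/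
/-!
Write `c_n = σ_n R`. Since `c_n → 0` and each `c_n < R`, in fact `sup c_n < R`, so the image `S`
of the closed unit ball under the diagonal operator `x ↦ (c_n x_n)` is relatively compact in
`B_X(R)`: its coordinates live in balls of the finite dimensional `E n` and its `ℓ¹`-tails are
uniformly small. Hence the continuous `f` is bounded by some `C` on `S`. As `S` is invariant
under the torus rotations, the integral formula gives `|f_k(y)| ≤ C` for `y ∈ S`, and
`k`-homogeneity turns `|f_k((c_n x_n))|` into `|f_k(x)| σ^k R^{‖k‖}`.
-/

open Filter MeasureTheory
open scoped BigOperators ENNReal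

/-- Rotation of an element of the `l¹`-sum by a point of the infinite torus
`T = (ℝ/ℤ)^∞`: `(e^{2πit}x)_n = e^{2πit_n} x_n`. -/
noncomputable def torusRot (E : ℕ → Type) [∀ n, NormedAddCommGroup (E n)]
    [∀ n, NormedSpace ℂ (E n)]
    (t : ∀ _ : ℕ, AddCircle (1 : ℝ)) (x : lp E 1) : lp E 1 :=
  ⟨fun n => (AddCircle.toCircle (t n) : ℂ) • x n, by
    apply memℓp_gen
    have : (fun n => ‖(AddCircle.toCircle (t n) : ℂ) • x n‖ ^ (1 : ℝ≥0∞).toReal)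
        = fun n => ‖x n‖ ^ (1 : ℝ≥0∞).toReal := by
      funext n
      simp [norm_smul, Circle.norm_coe]
    rw [this]
    exact (lp.memℓp x).summable (by norm_num)⟩

open Metric Topology

theorem Filter.Tendsto.exists_forall_le_lt {α β : Type*} [LinearOrder β] [TopologicalSpace β]
    [OrderTopology β] [DenselyOrdered β] {u : α → β} {a b : β}
    (hu : Tendsto u cofinite (𝓝 a)) (hab : a < b) (hub : ∀ i, u i < b) :
    ∃ s < b, ∀ i, u i ≤ s := by
  obtain ⟨c, hac, hcb⟩ := exists_between hab
  have hF : {i | ¬ u i < c}.Finite := eventually_cofinite.1 (hu.eventually_lt_const hac)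
  set M := insert c (hF.toFinset.image u)
  have hcM : c ∈ M := Finset.mem_insert_self _ _
  refine ⟨M.max' ⟨c, hcM⟩, (M.max'_lt_iff _).2 ?_, fun i => ?_⟩
  · simp only [M, Finset.mem_insert, Finset.mem_image, Set.Finite.mem_toFinset]
    rintro _ (rfl | ⟨i, -, rfl⟩)
    exacts [hcb, hub i]
  · by_cases hi : u i < c
    · exact hi.le.trans (M.le_max' c hcM)
    · exact M.le_max' _ (Finset.mem_insert_of_mem
        (Finset.mem_image_of_mem u (hF.mem_toFinset.2 hi)))

theorem Metric.totallyBounded_of_forall_exists_dist_lt {X : Type*} [PseudoMetricSpace X]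
    {s : Set X} (h : ∀ ε > 0, ∃ t, TotallyBounded t ∧ ∀ x ∈ s, ∃ y ∈ t, dist x y < ε) :
    TotallyBounded s := by
  refine totallyBounded_iff.2 fun ε hε => ?_
  obtain ⟨t, ht, hst⟩ := h (ε / 2) (half_pos hε)
  obtain ⟨u, hu, htu⟩ := totallyBounded_iff.1 ht (ε / 2) (half_pos hε)
  refine ⟨u, hu, fun x hx => ?_⟩
  obtain ⟨y, hyt, hxy⟩ := hst x hx
  obtain ⟨w, hwu, hyw⟩ := Set.mem_iUnion₂.1 (htu hyt)
  refine Set.mem_iUnion₂.2 ⟨w, hwu, ?_⟩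
  rw [mem_ball] at hyw ⊢
  linarith [dist_triangle x y w]

namespace lp

variable {α : Type*} {E : α → Type*} [∀ i, NormedAddCommGroup (E i)] {p : ℝ≥0∞}

theorem sub_sum_single_apply [DecidableEq α] (f : lp E p) (s : Finset α) (j : α) :
    (f - ∑ i ∈ s, lp.single p i (f i)) j = if j ∈ s then 0 else f j := by
  simp only [coeFn_sub, coeFn_sum, lp.coeFn_single, Pi.sub_apply, Finset.sum_apply,
    Finset.sum_pi_single]
  split_ifs <;> simp

theorem totallyBounded_of_norm_apply_le_of_tail [DecidableEq α] [Fact (1 ≤ p)]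
    [∀ i, ProperSpace (E i)] {S : Set (lp E p)} (r : α → ℝ) (hr : ∀ z ∈ S, ∀ i, ‖z i‖ ≤ r i)
    (htail : ∀ ε > 0, ∃ s : Finset α, ∀ z ∈ S, ‖z - ∑ i ∈ s, lp.single p i (z i)‖ < ε) :
    TotallyBounded S := by
  refine totallyBounded_of_forall_exists_dist_lt fun ε hε => ?_
  obtain ⟨s, hs⟩ := htail ε hε
  let truncate : (∀ i, E i) → lp E p := fun v => ∑ i ∈ s, lp.single p i (v i)
  have hcont : Continuous truncate :=
    continuous_finsetSum _ fun i _ => (isometry_single i).continuous.comp (continuous_apply i)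
  have hcompact : IsCompact (truncate '' Set.univ.pi fun i => closedBall 0 (r i)) :=
    (isCompact_univ_pi fun i => isCompact_closedBall _ _).image hcont
  refine ⟨_, hcompact.totallyBounded, fun z hz => ⟨truncate z, ⟨z, ?_, rfl⟩, ?_⟩⟩
  · simpa using hr z hz
  · rw [dist_eq_norm]
    exact hs z hz

variable {𝕜 : Type*} [NontriviallyNormedField 𝕜] [∀ i, NormedSpace 𝕜 (E i)]

theorem _root_.Memℓp.smul_of_norm_le {f : ∀ i, E i} (hf : Memℓp f p) {c : α → 𝕜} {a : 𝕜}
    (hc : ∀ i, ‖c i‖ ≤ ‖a‖) : Memℓp (fun i => c i • f i) p :=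
  (hf.const_smul a).mono' fun i => by
    rw [Pi.smul_apply, norm_smul, norm_smul]
    exact mul_le_mul_of_nonneg_right (hc i) (norm_nonneg _)

variable (E p) in
def diagonalUnitBall (c : α → 𝕜) : Set (lp E p) :=
  {z | ∃ x : lp E p, ‖x‖ ≤ 1 ∧ ∀ i, z i = c i • x i}

variable [Fact (1 ≤ p)]

theorem diagonalUnitBall_subset_closedBall {c : α → 𝕜} {a : 𝕜} (hc : ∀ i, ‖c i‖ ≤ ‖a‖) :
    diagonalUnitBall E p c ⊆ closedBall 0 ‖a‖ := by
  rintro z ⟨x, hx, hzx⟩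
  have hp : p ≠ 0 := (zero_lt_one.trans_le Fact.out).ne'
  rw [mem_closedBall_zero_iff]
  calc ‖z‖ ≤ ‖a • x‖ := norm_mono hp fun i => by
        rw [hzx, coeFn_smul, Pi.smul_apply, norm_smul, norm_smul]
        exact mul_le_mul_of_nonneg_right (hc i) (norm_nonneg _)
    _ = ‖a‖ * ‖x‖ := norm_const_smul hp x
    _ ≤ ‖a‖ := mul_le_of_le_one_right (norm_nonneg a) hx

theorem totallyBounded_diagonalUnitBall [∀ i, ProperSpace (E i)] {c : α → 𝕜}
    (hc : Tendsto c cofinite (𝓝 0)) : TotallyBounded (diagonalUnitBall E p c) := by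
  classical
  have hp : p ≠ 0 := (zero_lt_one.trans_le Fact.out).ne'
  refine totallyBounded_of_norm_apply_le_of_tail (fun i => ‖c i‖) ?_ fun ε hε => ?_
  · rintro z ⟨x, hx, hzx⟩ i
    rw [hzx, norm_smul]
    exact mul_le_of_le_one_right (norm_nonneg _) ((norm_apply_le_norm hp x i).trans hx)
  · obtain ⟨a, ha0, haε⟩ := NormedField.exists_norm_lt 𝕜 hε
    have hF : {i | ¬ ‖c i‖ < ‖a‖}.Finite :=
      eventually_cofinite.1 ((tendsto_zero_iff_norm_tendsto_zero.1 hc).eventually_lt_const ha0)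
    refine ⟨hF.toFinset, fun z ⟨x, hx, hzx⟩ => ?_⟩
    have htail : ∀ i, ‖(z - ∑ i ∈ hF.toFinset, lp.single p i (z i)) i‖ ≤ ‖(a • x) i‖ := by
      intro i
      refine (le_of_le_of_eq ?_ (norm_smul a (x i)).symm)
      rw [sub_sum_single_apply]
      split_ifs with hi
      · rw [_root_.norm_zero]; positivity
      · rw [Set.Finite.mem_toFinset, Set.mem_ofPred_eq, not_not] at hi
        rw [hzx, norm_smul]
        exact mul_le_mul_of_nonneg_right hi.le (norm_nonneg _)
    calc ‖z - ∑ i ∈ hF.toFinset, lp.single p i (z i)‖ ≤ ‖a • x‖ := norm_mono hp htail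
      _ = ‖a‖ * ‖x‖ := norm_const_smul hp x
      _ ≤ ‖a‖ := mul_le_of_le_one_right (norm_nonneg a) hx
      _ < ε := haε

theorem exists_bound_of_continuousOn_ball_of_diagonalUnitBall [∀ i, ProperSpace (E i)]
    {F : Type*} [NormedAddCommGroup F] {f : lp E p → F} {R : ℝ}
    (hf : ContinuousOn f (ball 0 R)) {c : α → 𝕜} (hc : Tendsto c cofinite (𝓝 0)) {a : 𝕜}
    (hca : ∀ i, ‖c i‖ ≤ ‖a‖) (haR : ‖a‖ < R) :
    ∃ C, ∀ z ∈ diagonalUnitBall E p c, ‖f z‖ ≤ C := by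
  have hK : closure (diagonalUnitBall E p c) ⊆ ball 0 R :=
    (closure_minimal (diagonalUnitBall_subset_closedBall hca) isClosed_closedBall).trans
      (closedBall_subset_ball haR)
  obtain ⟨C, hC⟩ := ((totallyBounded_diagonalUnitBall hc).closure.isCompact_of_isClosed
    isClosed_closure).exists_bound_of_continuousOn (hf.mono hK)
  exact ⟨C, fun z hz => hC z (subset_closure hz)⟩

end lp

section TorusRotation

variable {E : ℕ → Type} [∀ n, NormedAddCommGroup (E n)] [∀ n, NormedSpace ℂ (E n)]

theorem torusRot_apply (t : ∀ _ : ℕ, AddCircle (1 : ℝ)) (x : lp E 1) (n : ℕ) :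
    torusRot E t x n = (AddCircle.toCircle (t n) : ℂ) • x n :=
  rfl

theorem norm_torusRot (t : ∀ _ : ℕ, AddCircle (1 : ℝ)) (x : lp E 1) :
    ‖torusRot E t x‖ = ‖x‖ := by
  have h : ∀ n, ‖torusRot E t x n‖ = ‖x n‖ := fun n => by
    rw [torusRot_apply, norm_smul, Circle.norm_coe, one_mul]
  exact le_antisymm (lp.norm_mono one_ne_zero fun n => (h n).le)
    (lp.norm_mono one_ne_zero fun n => (h n).ge)

theorem torusRot_mem_diagonalUnitBall {c : ℕ → ℂ} {z : lp E 1}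
    (hz : z ∈ lp.diagonalUnitBall E 1 c) (t : ∀ _ : ℕ, AddCircle (1 : ℝ)) :
    torusRot E t z ∈ lp.diagonalUnitBall E 1 c := by
  obtain ⟨x, hx, hzx⟩ := hz
  refine ⟨torusRot E t x, (norm_torusRot t x).trans_le hx, fun n => ?_⟩
  rw [torusRot_apply, torusRot_apply, hzx, smul_comm]

theorem norm_integral_torusRot_mul_inv_le {f : lp E 1 → ℂ} {S : Set (lp E 1)} {C : ℝ}
    (hS : ∀ z ∈ S, ∀ t, torusRot E t z ∈ S) (hfC : ∀ z ∈ S, ‖f z‖ ≤ C)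
    (μ : Measure (∀ _ : ℕ, AddCircle (1 : ℝ))) [IsProbabilityMeasure μ]
    (φ : (∀ _ : ℕ, AddCircle (1 : ℝ)) → AddCircle (1 : ℝ)) {z : lp E 1} (hz : z ∈ S) :
    ‖∫ t, f (torusRot E t z) * (AddCircle.toCircle (φ t) : ℂ)⁻¹ ∂μ‖ ≤ C := by
  have hbound : ∀ t, ‖f (torusRot E t z) * (AddCircle.toCircle (φ t) : ℂ)⁻¹‖ ≤ C := fun t => by
    rw [norm_mul, norm_inv, Circle.norm_coe, inv_one, mul_one]
    exact hfC _ (hS z hz t)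
  simpa using norm_integral_le_of_norm_le_const (μ := μ) (Eventually.of_forall hbound)

end TorusRotation

theorem components_sup_estimate_general (E : ℕ → Type) [∀ n, NormedAddCommGroup (E n)]
    [∀ n, NormedSpace ℂ (E n)] [∀ n, FiniteDimensional ℂ (E n)]
    (R : ℝ) (hR : 0 < R)
    (f : lp E 1 → ℂ) (hf : DifferentiableOn ℂ f (Metric.ball 0 R))
    (μ : Measure (∀ _ : ℕ, AddCircle (1 : ℝ)))
    [IsProbabilityMeasure μ]
    (fk : (ℕ →₀ ℕ) → lp E 1 → ℂ)
    -- each `f_k` is holomorphic and `k`-homogeneous on all of `X`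
    (hfkhom : ∀ k : ℕ →₀ ℕ, Differentiable ℂ (fk k) ∧
      ∀ (x y : lp E 1) (lam : ℕ → ℂ), (∀ n, y n = lam n • x n) →
        fk k y = (∏ n ∈ k.support, lam n ^ k n) * fk k x)
    -- `f_k` is the `k`-homogeneous component of `f` on `B_X(R)`
    (hfk : ∀ (k : ℕ →₀ ℕ) (x : lp E 1), x ∈ Metric.ball (0 : lp E 1) R →
      fk k x = ∫ t, f (torusRot E t x) *
        (AddCircle.toCircle (∑ n ∈ k.support, (k n : ℤ) • t n) : ℂ)⁻¹ ∂μ)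
    (σ : ℕ → ℝ) (hσ : ∀ n, 0 ≤ σ n ∧ σ n < 1) (hσ0 : Tendsto σ atTop (nhds 0)) :
    ∃ M : ℝ, ∀ (k : ℕ →₀ ℕ) (x : lp E 1), ‖x‖ ≤ 1 →
      ‖fk k x‖ * (∏ n ∈ k.support, σ n ^ k n) *
        R ^ (k.sum fun _ v => v : ℕ) ≤ M := by
  rw [← Nat.cofinite_eq_atTop] at hσ0
  let c : ℕ → ℂ := fun n => ((σ n * R : ℝ) : ℂ)
  have hnorm_c : ∀ n, ‖c n‖ = σ n * R := fun n =>
    Complex.norm_of_nonneg (mul_nonneg (hσ n).1 hR.le)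
  have hσR : Tendsto (fun n => σ n * R) cofinite (𝓝 0) := by simpa using hσ0.mul_const R
  obtain ⟨r, hrR, hσr⟩ := hσR.exists_forall_le_lt hR fun n => by nlinarith [hσ n]
  have hr : ‖(r : ℂ)‖ = r := Complex.norm_of_nonneg (by nlinarith [hσ 0, hσr 0])
  have hcr : ∀ n, ‖c n‖ ≤ ‖(r : ℂ)‖ := fun n => by rw [hnorm_c, hr]; exact hσr n
  have hc0 : Tendsto c cofinite (𝓝 0) :=
    Complex.ofReal_zero ▸ (Complex.continuous_ofReal.tendsto 0).comp hσR
  obtain ⟨C, hC⟩ := lp.exists_bound_of_continuousOn_ball_of_diagonalUnitBall hf.continuousOn hc0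
    hcr (hr.trans_lt hrR)
  refine ⟨C, fun k x hx => ?_⟩
  let y : lp E 1 := ⟨fun n => c n • x n, (lp.memℓp x).smul_of_norm_le hcr⟩
  have hyS : y ∈ lp.diagonalUnitBall E 1 c := ⟨x, hx, fun _ => rfl⟩
  calc ‖fk k x‖ * (∏ n ∈ k.support, σ n ^ k n) * R ^ (k.sum fun _ v => v : ℕ)
      = ‖fk k y‖ := by
        rw [(hfkhom k).2 x y c fun _ => rfl, norm_mul, norm_prod]
        simp only [norm_pow, hnorm_c, mul_pow, Finset.prod_mul_distrib, Finset.prod_pow_eq_pow_sum,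
          Finsupp.sum]
        ring
    _ ≤ C := by
        rw [hfk k y (closedBall_subset_ball (hr.trans_lt hrR)
          (lp.diagonalUnitBall_subset_closedBall hcr hyS))]
        exact norm_integral_torusRot_mul_inv_le (fun _ hz t => torusRot_mem_diagonalUnitBall hz t)
          hC μ _ hyS

/-- If `f` is holomorphic on `B_X(R)` in the `l¹`-sum `X` of finite dimensional
Banach spaces, and `f_k(x) = ∫_T f(e^{2πit}x)e^{-2πi(k·t)}dt` are its `k`-homogeneous
components (Haar probability measure on the infinite torus), then for every `σ` with
`0 ≤ σ_n < 1`, `σ_n → 0`, one has `sup_k [f_k] σ^k R^{‖k‖} < ∞`. -/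
theorem components_sup_estimate (E : ℕ → Type) [∀ n, NormedAddCommGroup (E n)]
    [∀ n, NormedSpace ℂ (E n)] [∀ n, FiniteDimensional ℂ (E n)]
    (R : ℝ) (hR : 0 < R)
    (f : lp E 1 → ℂ) (hf : DifferentiableOn ℂ f (Metric.ball 0 R))
    (μ : Measure (∀ _ : ℕ, AddCircle (1 : ℝ)))
    [μ.IsAddHaarMeasure] [IsProbabilityMeasure μ]
    (fk : (ℕ →₀ ℕ) → lp E 1 → ℂ)
    -- each `f_k` is holomorphic and `k`-homogeneous on all of `X`
    (hfkhom : ∀ k : ℕ →₀ ℕ, Differentiable ℂ (fk k) ∧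
      ∀ (x y : lp E 1) (lam : ℕ → ℂ), (∀ n, y n = lam n • x n) →
        fk k y = (∏ n ∈ k.support, lam n ^ k n) * fk k x)
    -- `f_k` is the `k`-homogeneous component of `f` on `B_X(R)`
    (hfk : ∀ (k : ℕ →₀ ℕ) (x : lp E 1), x ∈ Metric.ball (0 : lp E 1) R →
      fk k x = ∫ t, f (torusRot E t x) *
        (AddCircle.toCircle (∑ n ∈ k.support, (k n : ℤ) • t n) : ℂ)⁻¹ ∂μ)
    (σ : ℕ → ℝ) (hσ : ∀ n, 0 ≤ σ n ∧ σ n < 1) (hσ0 : Tendsto σ atTop (nhds 0)) :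
    ∃ M : ℝ, ∀ (k : ℕ →₀ ℕ) (x : lp E 1), ‖x‖ ≤ 1 →
      ‖fk k x‖ * (∏ n ∈ k.support, σ n ^ k n) *
        R ^ (k.sum fun _ v => v : ℕ) ≤ M :=
  components_sup_estimate_general E R hR f hf μ fk hfkhom hfk σ hσ hσ0
end

section
/- Let X be a complex Banach space and f a ∂̄-closed (0,1)-form of class C^{m} with finite C^m norm on the unit ball B of X, m ≥ 1. Suppose u_n are continuous functions on B with sup_B |u_n| and sup-norms of ∂̄u_n uniformly bounded, and ∂̄u_n = f on the slice B ∩ E_n for an increasing exhausting sequence of finite dimensional subspaces E_n. Then the family (u_n∘ρ_n), with ρ_n projections onto E_n of norm 1, is locally equicontinuous on B (via the Cauchy–Pompeiu formula applied to one-dimensional slices). -/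
/-
Fix `x₀ ∈ B` and `s = 1 - ‖x₀‖`. For every `n`, the points `p = ρ_n x₀` and `q = ρ_n x` lie in
`E_n` with `‖p‖ ≤ ‖x₀‖` and `‖q - p‖ ≤ ‖x - x₀‖`, so the complex line `ζ ↦ p + ζ e`
(`e` the unit vector along `q - p`) stays in `E_n` and its `s`-disc stays in `B`. On that disc
`g = u_n(p + ζ e)` satisfies `∂̄g = φ` with `φ(ζ) = f(p + ζ e) e`, and `g`, `φ`, `dφ` are bounded
independently of `n`. Cutting `φ` off to a compactly supported `ψ` and taking its Cauchy transform
`T = (1/(πζ)) ⋆ ψ`, the Cauchy–Pompeiu formula gives `∂̄T = ψ`, so `g - T` is holomorphic and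
bounded on a smaller disc. The Cauchy estimates for `g - T` and the bound on `dT` then make `g`
Lipschitz near `0` with a constant independent of `n`, whence
`|u_n(ρ_n x) - u_n(ρ_n x₀)| ≤ L ‖x - x₀‖` for all `n` and all `x` near `x₀`.
-/

open Filter
open scoped Topology

open MeasureTheory Metric Complex Set Convolution
open scoped Real

/-- The Wirtinger component `∂/∂z̄` of a real-linear map `A : ℂ → ℂ`; for a function `g`,
`dbar (fderiv ℝ g z)` is `∂g/∂z̄` at `z`. -/
noncomputable def dbar : (ℂ →L[ℝ] ℂ) →L[ℝ] ℂ :=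
  (1 / 2 : ℂ) • (ContinuousLinearMap.apply ℝ ℂ (1 : ℂ) + I • ContinuousLinearMap.apply ℝ ℂ I)

lemma dbar_apply (A : ℂ →L[ℝ] ℂ) : dbar A = (1 / 2 : ℂ) * (A 1 + I * A I) := by
  simp [dbar, mul_add]

lemma dbar_eq_zero_iff (A : ℂ →L[ℝ] ℂ) : dbar A = 0 ↔ A I = I • A 1 := by
  rw [dbar_apply, smul_eq_mul]
  constructor
  · intro h
    linear_combination (-2 * I) * h + A I * I_sq
  · intro h
    rw [h]
    linear_combination (1 / 2 : ℂ) * A 1 * I_sq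

lemma apply_add_I_mul_apply_I_mul (A : ℂ →L[ℝ] ℂ) (w : ℂ) :
    A w + I * A (I * w) = 2 * (starRingEnd ℂ) w * dbar A := by
  have hA : ∀ v : ℂ, A v = v.re * A 1 + v.im * A I := fun v => by
    have hv : v = (v.re : ℝ) • (1 : ℂ) + (v.im : ℝ) • I := by simp [real_smul]
    conv_lhs => rw [hv, map_add, map_smul, map_smul, real_smul, real_smul]
  have hconj : (starRingEnd ℂ) w = w.re - w.im * I := by apply Complex.ext <;> simp
  rw [hA w, hA (I * w), dbar_apply, hconj]
  simp only [mul_re, mul_im, I_re, I_im]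
  push_cast
  ring_nf
  rw [I_sq]
  ring

lemma differentiableAt_complex_sub_of_dbar_eq {g T : ℂ → ℂ} {z : ℂ} (hg : DifferentiableAt ℝ g z)
    (hT : DifferentiableAt ℝ T z) (h : dbar (fderiv ℝ g z) = dbar (fderiv ℝ T z)) :
    DifferentiableAt ℂ (g - T) z := by
  refine differentiableAt_complex_iff_differentiableAt_real.2 ⟨hg.sub hT, (dbar_eq_zero_iff _).1 ?_⟩
  rw [fderiv_sub hg hT, map_sub, h, sub_self]

/-- The fundamental solution of `∂/∂z̄`. -/
noncomputable def cauchyKernel (t : ℂ) : ℂ := (π * t)⁻¹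

lemma locallyIntegrable_cauchyKernel : LocallyIntegrable cauchyKernel := by
  refine locallyIntegrable_of_norm_le_rpow (C := π⁻¹) (α := 1) (by simp) (by simp)
    (Eventually.of_forall fun t => ?_) ?_
  · simp [cauchyKernel, Real.rpow_neg_one, abs_of_pos Real.pi_pos, mul_comm]
  · exact (measurable_const.mul measurable_id).inv.aestronglyMeasurable

section PolarDerivatives

variable {E : Type*} [NormedAddCommGroup E]

lemma HasCompactSupport.exists_forall_norm_gt_eq_zero {F : Type*} [Zero F] {ψ : ℂ → F}
    (h : HasCompactSupport ψ) : ∃ R, ∀ w, R < ‖w‖ → ψ w = 0 := by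
  obtain ⟨R, hR⟩ := h.isCompact.isBounded.subset_closedBall 0
  refine ⟨R, fun w hw => image_eq_zero_of_notMem_tsupport fun hw' => ?_⟩
  simpa [hw.not_ge] using hR hw'

lemma Continuous.integrableOn_Ioi_of_forall_gt_eq_zero {V : ℝ → E} (hV : Continuous V) {R : ℝ}
    (hR : ∀ r, R < r → V r = 0) (a : ℝ) : IntegrableOn V (Ioi a) := by
  refine (hV.integrableOn_Icc (a := a) (b := max a R)).of_forall_sdiff_eq_zero
    measurableSet_Ioi fun r ⟨hr, hr'⟩ => hR r ?_
  by_contra! h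
  exact hr' ⟨le_of_lt hr, h.trans (le_max_right _ _)⟩

lemma Continuous.integrableOn_Ioi_prod_Ioo_of_forall_gt_eq_zero {V : ℝ × ℝ → E}
    (hV : Continuous V) {R : ℝ} (hR : ∀ p : ℝ × ℝ, R < p.1 → V p = 0) (a b c : ℝ) :
    IntegrableOn V (Ioi a ×ˢ Ioo b c) := by
  refine (hV.continuousOn.integrableOn_compact ((isCompact_Icc (a := a) (b := max a R)).prod
    (isCompact_Icc (a := b) (b := c)))).of_forall_sdiff_eq_zero
    (measurableSet_Ioi.prod measurableSet_Ioo) fun p ⟨hp, hp'⟩ => hR p ?_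
  simp only [mem_prod, mem_Icc, mem_Ioi, mem_Ioo] at hp hp'
  by_contra! h
  exact hp' ⟨⟨hp.1.le, h.trans (le_max_right _ _)⟩, hp.2.1.le, hp.2.2.le⟩

variable [NormedSpace ℝ E]

lemma fderiv_eq_zero_of_norm_gt {ψ : ℂ → E} {R : ℝ} (hR : ∀ w, R < ‖w‖ → ψ w = 0) {w : ℂ}
    (hw : R < ‖w‖) : fderiv ℝ ψ w = 0 := by
  have : ψ =ᶠ[𝓝 w] fun _ => 0 :=
    eventually_of_mem ((isOpen_lt continuous_const continuous_norm).mem_nhds hw) hR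
  rw [this.fderiv_eq, fderiv_const_apply]

lemma hasDerivAt_radial {ψ : ℂ → E} (hψ : Differentiable ℝ ψ) (θ r : ℝ) :
    HasDerivAt (fun r : ℝ => ψ (r * exp (θ * I)))
      (fderiv ℝ ψ (r * exp (θ * I)) (exp (θ * I))) r := by
  have h := (hasDerivAt_id r).ofReal_comp.mul_const (exp (θ * I))
  simp only [id, ofReal_one, one_mul] at h
  exact (hψ _).hasFDerivAt.comp_hasDerivAt r h

lemma hasDerivAt_angular {ψ : ℂ → E} (hψ : Differentiable ℝ ψ) (r θ : ℝ) :
    HasDerivAt (fun θ : ℝ => ψ (r * exp (θ * I)))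
      (fderiv ℝ ψ (r * exp (θ * I)) (r * (I * exp (θ * I)))) θ := by
  have h := (((hasDerivAt_id θ).ofReal_comp.mul_const I).cexp).const_mul (r : ℂ)
  simp only [id, ofReal_one, one_mul] at h
  rw [mul_comm I]
  exact (hψ _).hasFDerivAt.comp_hasDerivAt θ h

lemma integral_Ioi_fderiv_radial [CompleteSpace E] {ψ : ℂ → E} (hψ : ContDiff ℝ 1 ψ)
    (hcs : HasCompactSupport ψ) (θ : ℝ) :
    ∫ r in Ioi (0 : ℝ), fderiv ℝ ψ (r * exp (θ * I)) (exp (θ * I)) = -ψ 0 := by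
  obtain ⟨R, hR⟩ := hcs.exists_forall_norm_gt_eq_zero
  have hnorm : ∀ r : ℝ, R < r → R < ‖(r : ℂ) * exp (θ * I)‖ := fun r hr => by
    simpa [norm_exp_ofReal_mul_I] using hr.trans_le (le_abs_self r)
  have hcont : Continuous fun r : ℝ => fderiv ℝ ψ (r * exp (θ * I)) (exp (θ * I)) := by
    have := hψ.continuous_fderiv one_ne_zero
    fun_prop
  have hint := hcont.integrableOn_Ioi_of_forall_gt_eq_zero
    (fun r hr => by rw [fderiv_eq_zero_of_norm_gt hR (hnorm r hr), zero_apply]) 0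
  have hlim : Tendsto (fun r : ℝ => ψ (r * exp (θ * I))) atTop (𝓝 0) :=
    tendsto_const_nhds.congr' ((eventually_gt_atTop R).mono fun r hr => (hR _ (hnorm r hr)).symm)
  rw [integral_Ioi_of_hasDerivAt_of_tendsto'
    (fun r _ => hasDerivAt_radial (hψ.differentiable one_ne_zero) θ r) hint hlim]
  simp

lemma integral_Ioo_fderiv_angular [CompleteSpace E] {ψ : ℂ → E} (hψ : ContDiff ℝ 1 ψ)
    {r : ℝ} (hr : r ≠ 0) :
    ∫ θ in Ioo (-π) π, fderiv ℝ ψ (r * exp (θ * I)) (I * exp (θ * I)) = 0 := by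
  have hcont : Continuous fun θ : ℝ => fderiv ℝ ψ (r * exp (θ * I)) (r * (I * exp (θ * I))) := by
    have := hψ.continuous_fderiv one_ne_zero
    fun_prop
  have hFTC : ∫ θ in Ioo (-π) π, fderiv ℝ ψ (r * exp (θ * I)) (r * (I * exp (θ * I))) = 0 := by
    rw [← integral_Ioc_eq_integral_Ioo,
      ← intervalIntegral.integral_of_le (by linarith [Real.pi_pos]),
      intervalIntegral.integral_eq_sub_of_hasDerivAt
        (fun θ _ => hasDerivAt_angular (hψ.differentiable one_ne_zero) r θ)
        (hcont.intervalIntegrable _ _)]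
    simp [exp_mul_I]
  have hsmul : ∀ θ : ℝ, fderiv ℝ ψ (r * exp (θ * I)) (r * (I * exp (θ * I)))
      = r • fderiv ℝ ψ (r * exp (θ * I)) (I * exp (θ * I)) := fun θ => by
    rw [← ContinuousLinearMap.map_smul, Complex.real_smul]
  simp_rw [hsmul, integral_smul] at hFTC
  exact (smul_eq_zero.1 hFTC).resolve_left hr

end PolarDerivatives

lemma polarCoord_symm_eq (p : ℝ × ℝ) : Complex.polarCoord.symm p = p.1 * exp (p.2 * I) := by
  rw [Complex.polarCoord_symm_apply, exp_mul_I]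
  norm_cast

/-- The Cauchy–Pompeiu formula at the origin. In polar coordinates `η = r e^{iθ}` the integrand
`r η⁻¹ ∂ψ/∂z̄` is `(∂_r + (i/r) ∂_θ) ψ(r e^{iθ}) / 2`: the radial part integrates to `-ψ 0` along
every ray and the angular part to `0` around every circle. -/
theorem integral_inv_mul_dbar_fderiv {ψ : ℂ → ℂ} (hψ : ContDiff ℝ 1 ψ)
    (hcs : HasCompactSupport ψ) : ∫ η, η⁻¹ * dbar (fderiv ℝ ψ η) = -π * ψ 0 := by
  set e : ℝ → ℂ := fun θ => exp (θ * I)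
  set W₁ : ℝ × ℝ → ℂ := fun p => fderiv ℝ ψ (p.1 * e p.2) (e p.2)
  set W₂ : ℝ × ℝ → ℂ := fun p => I * fderiv ℝ ψ (p.1 * e p.2) (I * e p.2)
  have htarget : polarCoord.target = Ioi 0 ×ˢ Ioo (-π) π := rfl
  have hpolar : ∀ p ∈ polarCoord.target,
      p.1 • ((Complex.polarCoord.symm p)⁻¹ * dbar (fderiv ℝ ψ (Complex.polarCoord.symm p)))
        = (1 / 2 : ℂ) * (W₁ p + W₂ p) := by
    rintro ⟨r, θ⟩ ⟨hr, -⟩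
    have hr : (r : ℂ) ≠ 0 := ofReal_ne_zero.2 (ne_of_gt hr)
    simp only [W₁, W₂, polarCoord_symm_eq, apply_add_I_mul_apply_I_mul, e,
      ← exp_conj, map_mul, conj_ofReal, conj_I, real_smul, mul_inv, ← exp_neg]
    field_simp
  obtain ⟨R, hR⟩ := hcs.exists_forall_norm_gt_eq_zero
  have hnorm : ∀ p : ℝ × ℝ, R < p.1 → R < ‖(p.1 : ℂ) * e p.2‖ := fun p hp => by
    simpa [e, norm_exp_ofReal_mul_I] using hp.trans_le (le_abs_self p.1)
  have hψ' := hψ.continuous_fderiv one_ne_zero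
  have hint₁ : IntegrableOn W₁ polarCoord.target :=
    Continuous.integrableOn_Ioi_prod_Ioo_of_forall_gt_eq_zero (by fun_prop)
      (R := R) (fun p hp => by simp [W₁, fderiv_eq_zero_of_norm_gt hR (hnorm p hp)]) _ _ _
  have hint₂ : IntegrableOn W₂ polarCoord.target :=
    Continuous.integrableOn_Ioi_prod_Ioo_of_forall_gt_eq_zero (by fun_prop)
      (R := R) (fun p hp => by simp [W₂, fderiv_eq_zero_of_norm_gt hR (hnorm p hp)]) _ _ _
  have hW₁ : ∫ p in polarCoord.target, W₁ p = -(2 * π) * ψ 0 := by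
    rw [htarget, Measure.volume_eq_prod, ← Measure.prod_restrict, integral_prod_symm _
      (by rw [Measure.prod_restrict, ← Measure.volume_eq_prod]; exact hint₁),
      setIntegral_congr_fun measurableSet_Ioo (fun θ _ => integral_Ioi_fderiv_radial hψ hcs θ),
      setIntegral_const, Real.volume_real_Ioo_of_le (by linarith [Real.pi_pos]), real_smul]
    push_cast
    ring
  have hW₂ : ∫ p in polarCoord.target, W₂ p = 0 := by
    rw [htarget, Measure.volume_eq_prod, setIntegral_prod _
      (by rw [← Measure.volume_eq_prod]; exact hint₂)]
    refine (setIntegral_congr_fun measurableSet_Ioi fun r (hr : 0 < r) => ?_).trans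
      (integral_zero _ _)
    rw [integral_const_mul, integral_Ioo_fderiv_angular hψ hr.ne', mul_zero]
  rw [← Complex.integral_comp_polarCoord_symm,
    setIntegral_congr_fun polarCoord.open_target.measurableSet hpolar, integral_const_mul,
    integral_add hint₁ hint₂, hW₁, hW₂]
  ring

theorem integral_cauchyKernel_mul_dbar_fderiv {ψ : ℂ → ℂ} (hψ : ContDiff ℝ 1 ψ)
    (hcs : HasCompactSupport ψ) (z : ℂ) :
    ∫ t, cauchyKernel t * dbar (fderiv ℝ ψ (z - t)) = ψ z := by
  set φ : ℂ → ℂ := fun w => ψ (z - w)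
  have hφ : ContDiff ℝ 1 φ := hψ.comp (contDiff_const.sub contDiff_id)
  have hφcs : HasCompactSupport φ := hcs.comp_homeomorph (Homeomorph.subLeft z)
  have hφ' : ∀ t, fderiv ℝ φ t = -fderiv ℝ ψ (z - t) := fun t => by
    have := ((hψ.differentiable one_ne_zero (z - t)).hasFDerivAt.comp t
      ((hasFDerivAt_id t).const_sub z)).fderiv
    rw [show φ = ψ ∘ HSub.hSub z from rfl, this]
    ext; simp
  have := integral_inv_mul_dbar_fderiv hφ hφcs
  simp only [hφ', map_neg, φ, sub_zero] at this
  simp only [cauchyKernel, mul_inv, mul_assoc, integral_const_mul]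
  rw [← neg_neg (∫ t, _), ← integral_neg]
  simp only [← mul_neg, this]
  field_simp

noncomputable def cauchyTransform (ψ : ℂ → ℂ) : ℂ → ℂ :=
  cauchyKernel ⋆[ContinuousLinearMap.mul ℝ ℂ] ψ

lemma hasFDerivAt_cauchyTransform {ψ : ℂ → ℂ} (hψ : ContDiff ℝ 1 ψ) (hcs : HasCompactSupport ψ)
    (z : ℂ) : HasFDerivAt (cauchyTransform ψ)
      ((cauchyKernel ⋆[(ContinuousLinearMap.mul ℝ ℂ).precompR ℂ] fderiv ℝ ψ) z) z :=
  hcs.hasFDerivAt_convolution_right _ locallyIntegrable_cauchyKernel hψ z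

theorem dbar_fderiv_cauchyTransform {ψ : ℂ → ℂ} (hψ : ContDiff ℝ 1 ψ)
    (hcs : HasCompactSupport ψ) (z : ℂ) : dbar (fderiv ℝ (cauchyTransform ψ) z) = ψ z := by
  have hint := (hcs.fderiv ℝ).convolutionExists_right ((ContinuousLinearMap.mul ℝ ℂ).precompR ℂ)
    locallyIntegrable_cauchyKernel (hψ.continuous_fderiv one_ne_zero) z
  rw [(hasFDerivAt_cauchyTransform hψ hcs z).fderiv, convolution_def,
    ← ContinuousLinearMap.integral_comp_comm _ hint,
    ← integral_cauchyKernel_mul_dbar_fderiv hψ hcs z]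
  congr 1 with t
  simp [dbar_apply]
  ring

lemma norm_cauchyKernel_convolution_le {E F : Type*} [NormedAddCommGroup E] [NormedSpace ℝ E]
    [NormedAddCommGroup F] [NormedSpace ℝ F] (L : ℂ →L[ℝ] E →L[ℝ] F) {g : ℂ → E} {M R r : ℝ}
    (hg : ∀ w, ‖g w‖ ≤ M) (hsupp : Function.support g ⊆ closedBall 0 R) {z : ℂ} (hz : ‖z‖ ≤ r) :
    ‖(cauchyKernel ⋆[L] g) z‖ ≤ ‖L‖ * M * ∫ t in closedBall (0 : ℂ) (R + r), ‖cauchyKernel t‖ := by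
  have hint : Integrable ((closedBall (0 : ℂ) (R + r)).indicator
      fun t => ‖L‖ * M * ‖cauchyKernel t‖) :=
    (integrable_indicator_iff measurableSet_closedBall).2
      ((locallyIntegrable_cauchyKernel.integrableOn_isCompact
        (isCompact_closedBall 0 _)).norm.const_mul _)
  rw [convolution_def, ← integral_const_mul, ← integral_indicator measurableSet_closedBall]
  refine norm_integral_le_of_norm_le hint (Eventually.of_forall fun t => ?_)
  by_cases ht : t ∈ closedBall (0 : ℂ) (R + r)
  · rw [indicator_of_mem ht]
    calc ‖L (cauchyKernel t) (g (z - t))‖ ≤ ‖L‖ * ‖cauchyKernel t‖ * ‖g (z - t)‖ :=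
          L.le_opNorm₂ _ _
      _ ≤ ‖L‖ * ‖cauchyKernel t‖ * M := by gcongr; exact hg _
      _ = ‖L‖ * M * ‖cauchyKernel t‖ := by ring
  · have hzero : g (z - t) = 0 := Function.notMem_support.1 fun h => ?_
    · rw [indicator_of_notMem ht, hzero, map_zero, norm_zero]
    have := mem_closedBall_zero_iff.1 (hsupp h)
    rw [mem_closedBall_zero_iff, not_le] at ht
    have := norm_sub_norm_le t z
    rw [norm_sub_rev] at this
    linarith

lemma exists_cutoff_of_contDiffOn_ball {s : ℝ} (hs : 0 < s) : ∃ K : ℝ, ∀ (φ : ℂ → ℂ) (M : ℝ),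
    ContDiffOn ℝ 1 φ (ball 0 s) → (∀ z ∈ ball (0 : ℂ) s, ‖φ z‖ ≤ M) →
    (∀ z ∈ ball (0 : ℂ) s, ‖fderiv ℝ φ z‖ ≤ M) →
    ∃ ψ : ℂ → ℂ, ContDiff ℝ 1 ψ ∧ Function.support ψ ⊆ closedBall 0 s ∧
      EqOn ψ φ (ball 0 (s / 2)) ∧ (∀ w, ‖ψ w‖ ≤ M) ∧ ∀ w, ‖fderiv ℝ ψ w‖ ≤ K * M := by
  let χ : ContDiffBump (0 : ℂ) := ⟨s / 2, 3 * s / 4, by positivity, by linarith⟩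
  obtain ⟨Kχ, hKχ⟩ := (χ.contDiff.continuous_fderiv one_ne_zero).bounded_above_of_compact_support
    (χ.hasCompactSupport.fderiv ℝ)
  have hKχ0 : 0 ≤ Kχ := (norm_nonneg _).trans (hKχ 0)
  refine ⟨1 + Kχ, fun φ M hφ hφM hφ'M => ?_⟩
  have hM : 0 ≤ M := (norm_nonneg _).trans (hφM 0 (mem_ball_self hs))
  have hχ : ∀ w, ‖χ w‖ ≤ 1 := fun w => by
    rw [Real.norm_of_nonneg χ.nonneg]; exact χ.le_one
  have hχ0 : ∀ w : ℂ, 3 * s / 4 ≤ ‖w‖ → χ w = 0 := fun w hw =>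
    χ.zero_of_le_dist (by simpa using hw)
  set ψ : ℂ → ℂ := fun w => χ w • φ w
  have hψ0 : ∀ w : ℂ, s ≤ ‖w‖ → ψ =ᶠ[𝓝 w] 0 := fun w hw =>
    eventually_of_mem ((isOpen_lt continuous_const continuous_norm).mem_nhds
      (show 3 * s / 4 < ‖w‖ by linarith)) fun v hv => by simp [ψ, hχ0 v hv.le]
  have hφd : ∀ w ∈ ball (0 : ℂ) s, ContDiffAt ℝ 1 φ w := fun w hw =>
    hφ.contDiffAt (isOpen_ball.mem_nhds hw)
  refine ⟨ψ, contDiff_iff_contDiffAt.2 fun w => ?_, fun w hw => ?_, fun w hw => ?_, fun w => ?_,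
    fun w => ?_⟩
  · by_cases hw : w ∈ ball (0 : ℂ) s
    · exact χ.contDiff.contDiffAt.smul (hφd w hw)
    · exact contDiffAt_const.congr_of_eventuallyEq (hψ0 w (by simpa using hw))
  · by_contra h
    exact hw (by simp [ψ, hχ0 w (by simp at h; linarith)])
  · simp [ψ, χ.one_of_mem_closedBall (ball_subset_closedBall hw)]
  · by_cases hw : w ∈ ball (0 : ℂ) s
    · simpa [ψ, norm_smul] using mul_le_mul (hχ w) (hφM w hw) (norm_nonneg _) zero_le_one
    · simpa [(hψ0 w (by simpa using hw)).eq_of_nhds] using by positivity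
  · by_cases hw : w ∈ ball (0 : ℂ) s
    · rw [fderiv_fun_smul (χ.contDiff.differentiable one_ne_zero w)
        ((hφd w hw).differentiableAt one_ne_zero)]
      calc _ ≤ ‖χ w‖ * ‖fderiv ℝ φ w‖ + ‖fderiv ℝ χ w‖ * ‖φ w‖ := by
            grw [norm_add_le, norm_smul, ContinuousLinearMap.norm_smulRight_apply]
        _ ≤ 1 * M + Kχ * M := by
            gcongr
            exacts [hχ w, hφ'M w hw, hKχ w, hφM w hw]
        _ = (1 + Kχ) * M := by ring
    · rw [(hψ0 w (by simpa using hw)).fderiv_eq]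
      simpa using mul_nonneg (by linarith) hM

lemma norm_sub_le_of_differentiableOn_ball {E : Type*} [NormedAddCommGroup E] [NormedSpace ℂ E]
    {h : ℂ → E} {r A : ℝ} (hr : 0 < r) (hd : DifferentiableOn ℂ h (ball 0 (2 * r)))
    (hA : ∀ z ∈ ball (0 : ℂ) (2 * r), ‖h z‖ ≤ A) {a b : ℂ} (ha : a ∈ ball (0 : ℂ) r)
    (hb : b ∈ ball (0 : ℂ) r) : ‖h a - h b‖ ≤ 2 * A / r * ‖a - b‖ := by
  have hsub : ∀ w ∈ ball (0 : ℂ) r, ball w r ⊆ ball 0 (2 * r) := fun w hw v hv => by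
    rw [mem_ball] at *
    linarith [dist_triangle v w 0]
  refine (convex_ball 0 r).norm_image_sub_le_of_norm_fderiv_le
    (fun w hw => hd.differentiableAt (isOpen_ball.mem_nhds (hsub w hw (mem_ball_self hr))))
    (fun w hw => norm_fderiv_le_div_of_mapsTo_ball (hd.mono (hsub w hw)) (fun v hv => ?_) hr) hb ha
  rw [mem_closedBall, dist_eq_norm]
  linarith [norm_sub_le (h v) (h w), hA v (hsub w hw hv), hA w (hsub w hw (mem_ball_self hr))]

theorem exists_norm_sub_le_of_dbar_fderiv_eq {s : ℝ} (hs : 0 < s) (C M : ℝ) :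
    ∃ L : ℝ, ∀ g φ : ℂ → ℂ, (∀ z ∈ ball (0 : ℂ) s, ‖g z‖ ≤ C) → DifferentiableOn ℝ g (ball 0 s) →
      (∀ z ∈ ball (0 : ℂ) s, dbar (fderiv ℝ g z) = φ z) → ContDiffOn ℝ 1 φ (ball 0 s) →
      (∀ z ∈ ball (0 : ℂ) s, ‖φ z‖ ≤ M) → (∀ z ∈ ball (0 : ℂ) s, ‖fderiv ℝ φ z‖ ≤ M) →
      ∀ a ∈ ball (0 : ℂ) (s / 4), ∀ b ∈ ball (0 : ℂ) (s / 4), ‖g a - g b‖ ≤ L * ‖a - b‖ := by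
  obtain ⟨K, hK⟩ := exists_cutoff_of_contDiffOn_ball hs
  set κ := ∫ t in closedBall (0 : ℂ) (s + s), ‖cauchyKernel t‖
  set L₀ := ‖ContinuousLinearMap.mul ℝ ℂ‖ * M * κ
  set L₁ := ‖(ContinuousLinearMap.mul ℝ ℂ).precompR ℂ‖ * (K * M) * κ
  refine ⟨2 * (C + L₀) / (s / 4) + L₁,
    fun g φ hgC hg hgφ hφ hφM hφ'M a ha b hb => ?_⟩
  obtain ⟨ψ, hψ, hsupp, hψφ, hψM, hψ'M⟩ := hK φ M hφ hφM hφ'M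
  have hcs : HasCompactSupport ψ := .of_support_subset_isCompact (isCompact_closedBall 0 s) hsupp
  set T := cauchyTransform ψ
  have hTd : ∀ z, HasFDerivAt T (fderiv ℝ T z) z := fun z =>
    (hasFDerivAt_cauchyTransform hψ hcs z).differentiableAt.hasFDerivAt
  have hTbd : ∀ z ∈ ball (0 : ℂ) s, ‖T z‖ ≤ L₀ := fun z hz =>
    norm_cauchyKernel_convolution_le _ hψM hsupp (mem_ball_zero_iff.1 hz).le
  have hT'bd : ∀ z ∈ ball (0 : ℂ) s, ‖fderiv ℝ T z‖ ≤ L₁ := fun z hz => by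
    rw [(hasFDerivAt_cauchyTransform hψ hcs z).fderiv]
    exact norm_cauchyKernel_convolution_le _ hψ'M
      ((support_fderiv_subset ℝ).trans (closure_minimal hsupp isClosed_closedBall))
      (mem_ball_zero_iff.1 hz).le
  have hball : ∀ {r}, r ≤ s → ball (0 : ℂ) r ⊆ ball 0 s := fun h => ball_subset_ball h
  have hhol : DifferentiableOn ℂ (g - T) (ball 0 (2 * (s / 4))) := fun z hz => by
    have hzs : z ∈ ball (0 : ℂ) s := hball (by linarith) hz
    refine (differentiableAt_complex_sub_of_dbar_eq
      (hg.differentiableAt (isOpen_ball.mem_nhds hzs)) (hTd z).differentiableAt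
      ?_).differentiableWithinAt
    rw [hgφ z hzs, dbar_fderiv_cauchyTransform hψ hcs,
      hψφ (by rwa [show s / 2 = 2 * (s / 4) by ring])]
  have hhbd : ∀ z ∈ ball (0 : ℂ) (2 * (s / 4)), ‖(g - T) z‖ ≤ C + L₀ := fun z hz => by
    have hzs : z ∈ ball (0 : ℂ) s := hball (by linarith) hz
    exact (norm_sub_le _ _).trans (add_le_add (hgC z hzs) (hTbd z hzs))
  have hTlip : ‖T a - T b‖ ≤ L₁ * ‖a - b‖ :=
    (convex_ball 0 (s / 4)).norm_image_sub_le_of_norm_fderiv_le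
      (fun z _ => (hTd z).differentiableAt) (fun z hz => hT'bd z (hball (by linarith) hz)) hb ha
  calc ‖g a - g b‖ = ‖((g - T) a - (g - T) b) + (T a - T b)‖ := by
        simp only [Pi.sub_apply]; congr 1; abel
    _ ≤ 2 * (C + L₀) / (s / 4) * ‖a - b‖ + L₁ * ‖a - b‖ :=
      (norm_add_le _ _).trans (add_le_add
        (norm_sub_le_of_differentiableOn_ball (by positivity) hhol hhbd ha hb) hTlip)
    _ = _ := by ring

section ComplexLine

variable {X : Type*} [NormedAddCommGroup X] [NormedSpace ℂ X]

lemma hasFDerivAt_comp_add_smul {Y : Type*} [NormedAddCommGroup Y] [NormedSpace ℝ Y] {F : X → Y}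
    {F' : X →L[ℝ] Y} {p e : X} {ζ : ℂ} (h : HasFDerivAt F F' (p + ζ • e)) :
    HasFDerivAt (fun ζ : ℂ => F (p + ζ • e))
      (F'.comp ((ContinuousLinearMap.toSpanSingleton ℂ e).restrictScalars ℝ)) ζ :=
  h.comp ζ (((ContinuousLinearMap.toSpanSingleton ℂ e).restrictScalars ℝ).hasFDerivAt.const_add p)

lemma dbar_fderiv_comp_add_smul {u : X → ℂ} {u' : X →L[ℝ] ℂ} {p e : X} {ζ : ℂ}
    (h : HasFDerivAt u u' (p + ζ • e)) :
    dbar (fderiv ℝ (fun ζ : ℂ => u (p + ζ • e)) ζ) = (1 / 2 : ℂ) * (u' e + I * u' (I • e)) := by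
  rw [(hasFDerivAt_comp_add_smul h).fderiv, dbar_apply]
  simp

lemma norm_fderiv_apply_comp_add_smul_le {f : X → X →L[ℝ] ℂ} {f' : X →L[ℝ] X →L[ℝ] ℂ} {p e : X}
    {ζ : ℂ} {M : ℝ} (h : HasFDerivAt f f' (p + ζ • e)) (hM : ‖f'‖ ≤ M) (he : ‖e‖ = 1) :
    ‖fderiv ℝ (fun ζ : ℂ => f (p + ζ • e) e) ζ‖ ≤ M := by
  have hd : HasFDerivAt (fun ζ : ℂ => f (p + ζ • e) e) _ ζ :=
    (ContinuousLinearMap.apply ℝ ℂ e).hasFDerivAt.comp ζ (hasFDerivAt_comp_add_smul h)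
  rw [hd.fderiv]
  refine ContinuousLinearMap.opNorm_le_bound _ ((norm_nonneg f').trans hM) fun v => ?_
  calc _ ≤ ‖f' (v • e)‖ * ‖e‖ := ContinuousLinearMap.le_opNorm _ _
    _ ≤ M * ‖v‖ := by simpa [he, norm_smul] using f'.le_of_opNorm_le hM (v • e)

lemma add_smul_mem_ball {p e : X} (he : ‖e‖ = 1) {s : ℝ} (hps : ‖p‖ + s ≤ 1) {ζ : ℂ}
    (hζ : ζ ∈ ball (0 : ℂ) s) : p + ζ • e ∈ ball (0 : X) 1 := by
  rw [mem_ball_zero_iff] at *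
  calc ‖p + ζ • e‖ ≤ ‖p‖ + ‖ζ‖ := by simpa [norm_smul, he] using norm_add_le p (ζ • e)
    _ < 1 := by linarith

theorem exists_norm_sub_le_of_dbar_eq_on_submodule {s : ℝ} (hs : 0 < s) (C M : ℝ) :
    ∃ L : ℝ, 0 ≤ L ∧ ∀ (u : X → ℂ) (f : X → X →L[ℝ] ℂ) (V : Submodule ℂ X),
      (∀ x ∈ ball (0 : X) 1, ‖u x‖ ≤ C) → DifferentiableOn ℝ u (ball 0 1) →
      ContDiffOn ℝ 1 f (ball 0 1) → (∀ x ∈ ball (0 : X) 1, ‖f x‖ ≤ M) →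
      (∀ x ∈ ball (0 : X) 1, ‖fderiv ℝ f x‖ ≤ M) →
      (∀ x ∈ ball (0 : X) 1, x ∈ V → ∀ ξ ∈ V,
        (1 / 2 : ℂ) * (fderiv ℝ u x ξ + I * fderiv ℝ u x (I • ξ)) = f x ξ) →
      ∀ p ∈ V, ∀ q ∈ V, ‖p‖ + s ≤ 1 → ‖q - p‖ < s / 4 → ‖u q - u p‖ ≤ L * ‖q - p‖ := by
  obtain ⟨L, hL⟩ := exists_norm_sub_le_of_dbar_fderiv_eq hs C M
  refine ⟨max L 0, le_max_right _ _, fun u f V huC hu hf hfM hf'M hsol p hp q hq hps hpq => ?_⟩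
  rcases eq_or_ne q p with rfl | hne
  · simp
  set t := ‖q - p‖
  have ht : 0 < t := norm_pos_iff.2 (sub_ne_zero.2 hne)
  set e : X := (t : ℂ)⁻¹ • (q - p)
  have he : ‖e‖ = 1 := by
    rw [norm_smul, norm_inv, norm_real, Real.norm_of_nonneg ht.le, inv_mul_cancel₀ ht.ne']
  have heV : e ∈ V := V.smul_mem _ (V.sub_mem hq hp)
  have hmem := fun ζ (hζ : ζ ∈ ball (0 : ℂ) s) => add_smul_mem_ball he hps hζ
  have hu' := fun ζ hζ => (hu.differentiableAt (isOpen_ball.mem_nhds (hmem ζ hζ))).hasFDerivAt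
  have hf' := fun ζ hζ =>
    ((hf.contDiffAt (isOpen_ball.mem_nhds (hmem ζ hζ))).differentiableAt one_ne_zero).hasFDerivAt
  have key := hL (fun ζ => u (p + ζ • e)) (fun ζ => f (p + ζ • e) e)
    (fun ζ hζ => huC _ (hmem ζ hζ))
    (fun ζ hζ => (hasFDerivAt_comp_add_smul (hu' ζ hζ)).differentiableAt.differentiableWithinAt)
    (fun ζ hζ => by
      rw [dbar_fderiv_comp_add_smul (hu' ζ hζ),
        hsol _ (hmem ζ hζ) (V.add_mem hp (V.smul_mem ζ heV)) e heV])
    ((ContinuousLinearMap.apply ℝ ℂ e).contDiff.comp_contDiffOn (hf.comp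
      (contDiff_const.add (contDiff_id.smul contDiff_const)).contDiffOn hmem))
    (fun ζ hζ => (ContinuousLinearMap.le_of_opNorm_le _ (hfM _ (hmem ζ hζ)) e).trans_eq
      (by rw [he, mul_one]))
    (fun ζ hζ => norm_fderiv_apply_comp_add_smul_le (hf' ζ hζ) (hf'M _ (hmem ζ hζ)) he)
    t (by simpa [abs_of_pos ht] using hpq) 0 (mem_ball_self (by positivity))
  have hq' : p + (t : ℂ) • e = q := by
    rw [smul_smul, mul_inv_cancel₀ (ofReal_ne_zero.2 ht.ne'), one_smul, add_sub_cancel]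
  beta_reduce at key
  rw [hq', zero_smul, add_zero, sub_zero, norm_real, Real.norm_of_nonneg ht.le] at key
  exact key.trans (mul_le_mul_of_nonneg_right (le_max_left _ _) ht.le)

end ComplexLine

theorem equicontinuity_of_dbar_solutions_general
    (X : Type*) [NormedAddCommGroup X] [NormedSpace ℂ X]
    (m : ℕ) (hm : 1 ≤ m)
    (f : X → (X →L[ℝ] ℂ))
    -- `f` is of class `C^m` with finite `C^m` norm on `B`
    (hfC : ContDiffOn ℝ m f (Metric.ball (0 : X) 1))
    (hfnorm : ∃ Mf : ℝ, ∀ j ≤ m, ∀ x ∈ Metric.ball (0 : X) 1,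
      ‖iteratedFDerivWithin ℝ j f (Metric.ball (0 : X) 1) x‖ ≤ Mf)
    (u : ℕ → X → ℂ)
    (hudiff : ∀ n, DifferentiableOn ℝ (u n) (Metric.ball (0 : X) 1))
    (C : ℝ)
    (hubdd : ∀ n, ∀ x ∈ Metric.ball (0 : X) 1, ‖u n x‖ ≤ C)
    (ρ : ℕ → X →L[ℂ] X)
    (hρnorm : ∀ n, ‖ρ n‖ ≤ 1)
    -- `∂̄ u_n = f` on `B ∩ E_n`
    (hsol : ∀ n, ∀ x ∈ Metric.ball (0 : X) 1, x ∈ Set.range (ρ n) → ∀ ξ : X,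
      (1/2 : ℂ) * (fderiv ℝ (u n) x ξ +
        Complex.I * fderiv ℝ (u n) x (Complex.I • ξ)) = f x ξ) :
    EquicontinuousOn (fun n => (u n) ∘ (ρ n)) (Metric.ball (0 : X) 1) := by
  obtain ⟨M, hM⟩ := hfnorm
  have hfM : ∀ x ∈ ball (0 : X) 1, ‖f x‖ ≤ M := fun x hx => by
    simpa using hM 0 (Nat.zero_le m) x hx
  have hf'M : ∀ x ∈ ball (0 : X) 1, ‖fderiv ℝ f x‖ ≤ M := fun x hx => by
    simpa [norm_iteratedFDerivWithin_one _ (isOpen_ball.uniqueDiffWithinAt hx),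
      fderivWithin_of_isOpen isOpen_ball hx] using hM 1 hm x hx
  intro x₀ hx₀
  have hs : 0 < 1 - ‖x₀‖ := sub_pos.2 (mem_ball_zero_iff.1 hx₀)
  obtain ⟨L, hL0, hL⟩ := exists_norm_sub_le_of_dbar_eq_on_submodule (X := X) hs C M
  have hlip : ∀ n, ∀ x ∈ ball x₀ ((1 - ‖x₀‖) / 4),
      ‖u n (ρ n x) - u n (ρ n x₀)‖ ≤ L * ‖x - x₀‖ := fun n x hx => by
    have hρ : ∀ y, ‖ρ n y‖ ≤ ‖y‖ := fun y => by simpa using (ρ n).le_of_opNorm_le (hρnorm n) y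
    have hρx : ‖ρ n x - ρ n x₀‖ ≤ ‖x - x₀‖ := by simpa using hρ (x - x₀)
    calc ‖u n (ρ n x) - u n (ρ n x₀)‖ ≤ L * ‖ρ n x - ρ n x₀‖ :=
          hL (u n) f (LinearMap.range (ρ n : X →ₗ[ℂ] X)) (hubdd n) (hudiff n)
            (hfC.of_le (by exact_mod_cast hm)) hfM hf'M (fun x hx hxV ξ _ => hsol n x hx hxV ξ)
            _ ⟨x₀, rfl⟩ _ ⟨x, rfl⟩ (show ‖ρ n x₀‖ + _ ≤ 1 by linarith [hρ x₀])
            (hρx.trans_lt (by simpa [dist_eq_norm] using hx))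
      _ ≤ L * ‖x - x₀‖ := by gcongr
  refine (Metric.equicontinuousAt_of_continuity_modulus (fun x => L * dist x x₀) ?_ _ ?_)
    |>.equicontinuousWithinAt _
  · simpa using ((continuous_id.dist (continuous_const (y := x₀))).tendsto x₀).const_mul L
  · filter_upwards [ball_mem_nhds x₀ (div_pos hs four_pos)] with x hx n
    rw [dist_comm, dist_eq_norm, dist_eq_norm]
    exact hlip n x hx

/-- Let `X` be a complex Banach space, `f` a `∂̄`-closed `(0,1)`-form of class
`C^m` (`m ≥ 1`) with finite `C^m` norm on the unit ball `B`. Suppose `u_n` are continuous on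
`B`, with `sup_B |u_n|` and the sup-norms of `∂̄u_n` uniformly bounded, and `∂̄u_n = f` on
`B ∩ E_n` for an increasing exhausting sequence of finite dimensional subspaces
`E_n = range ρ_n`, where `ρ_n` are norm-one projections tending pointwise to the identity.
Then the family `(u_n ∘ ρ_n)` is (locally) equicontinuous on `B`. -/
theorem equicontinuity_of_dbar_solutions
    (X : Type*) [NormedAddCommGroup X] [NormedSpace ℂ X] [CompleteSpace X]
    (m : ℕ) (hm : 1 ≤ m)
    (f : X → (X →L[ℝ] ℂ))
    -- `f` is a `(0,1)`-form: its values are conjugate-linear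
    (hf01 : ∀ x ∈ Metric.ball (0 : X) 1, ∀ ξ : X,
      f x (Complex.I • ξ) = -Complex.I * f x ξ)
    -- `f` is of class `C^m` with finite `C^m` norm on `B`
    (hfC : ContDiffOn ℝ m f (Metric.ball (0 : X) 1))
    (hfnorm : ∃ Mf : ℝ, ∀ j ≤ m, ∀ x ∈ Metric.ball (0 : X) 1,
      ‖iteratedFDerivWithin ℝ j f (Metric.ball (0 : X) 1) x‖ ≤ Mf)
    -- `f` is `∂̄`-closed
    (hfcl : ∀ x ∈ Metric.ball (0 : X) 1, ∀ ξ η : X,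
      (fderiv ℝ f x ξ) η + Complex.I * (fderiv ℝ f x (Complex.I • ξ)) η =
      (fderiv ℝ f x η) ξ + Complex.I * (fderiv ℝ f x (Complex.I • η)) ξ)
    (u : ℕ → X → ℂ)
    (hu : ∀ n, ContinuousOn (u n) (Metric.ball (0 : X) 1))
    (hudiff : ∀ n, DifferentiableOn ℝ (u n) (Metric.ball (0 : X) 1))
    (C : ℝ)
    (hubdd : ∀ n, ∀ x ∈ Metric.ball (0 : X) 1, ‖u n x‖ ≤ C)
    (hdbarbdd : ∀ n, ∀ x ∈ Metric.ball (0 : X) 1, ∀ ξ : X,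
      ‖(1/2 : ℂ) * (fderiv ℝ (u n) x ξ +
        Complex.I * fderiv ℝ (u n) x (Complex.I • ξ))‖ ≤ C * ‖ξ‖)
    (ρ : ℕ → X →L[ℂ] X)
    (hρnorm : ∀ n, ‖ρ n‖ ≤ 1)
    (hρproj : ∀ n x, ρ n (ρ n x) = ρ n x)
    (hρfin : ∀ n, FiniteDimensional ℂ (LinearMap.range (ρ n : X →ₗ[ℂ] X)))
    (hρmono : ∀ n, Set.range (ρ n) ⊆ Set.range (ρ (n+1)))
    (hρlim : ∀ x : X, Tendsto (fun n => ρ n x) atTop (𝓝 x))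
    -- `∂̄ u_n = f` on `B ∩ E_n`
    (hsol : ∀ n, ∀ x ∈ Metric.ball (0 : X) 1, x ∈ Set.range (ρ n) → ∀ ξ : X,
      (1/2 : ℂ) * (fderiv ℝ (u n) x ξ +
        Complex.I * fderiv ℝ (u n) x (Complex.I • ξ)) = f x ξ) :
    EquicontinuousOn (fun n => (u n) ∘ (ρ n)) (Metric.ball (0 : X) 1) :=
  equicontinuity_of_dbar_solutions_general X m hm f hfC hfnorm u hudiff C hubdd ρ hρnorm hsol
end
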